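/- arXiv:1903.01835 — 6 statements merged into one kernel-verified Lean document; each statement's English description precedes it below -/
import Mathlib

section
/- Let k > 0 and let φ be a function holomorphic on a neighborhood of [-1,1] in ℂ that verifies the E(k) property with threshold τ_φ. Then for every A ∈ (0, τ_φ) there exists B ∈ (0, A) such that φ([-1,1]_{k,B,p+1}) ⊆ [-1,1]_{k,B,p} for every integer p ≥ 1; one may take B = A (2 N(A))^{-1/k}, where N(A) is the integer furnished by the E(k) property for A. -/
open Set

/-- The segment `[-1,1]` viewed as a subset of `ℂ`. -/
noncomputable def seg : Set ℂ := Complex.ofReal '' Icc (-1:ℝ) 1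

/-- The neighborhood `[-1,1]_{k,A,n} = {z ∈ ℂ : dist(z,[-1,1]) < A n^{-1/k}}`. -/
noncomputable def nbhd (k A : ℝ) (n : ℕ) : Set ℂ :=
  {z : ℂ | Metric.infDist z seg < A * (n:ℝ) ^ (-(1:ℝ)/k)}

/-!
Shrinking the radius `A` by the factor `M^{-1/k}` turns `[-1,1]_{k,A,n}` into
`[-1,1]_{k,A,Mn}`. Since these neighborhoods shrink as the index grows, for `M ≥ N(A)` and
`p ≥ 1` we get `φ([-1,1]_{k,A,M(p+1)}) ⊆ φ([-1,1]_{k,A,Mp+1}) ⊆ [-1,1]_{k,A,Mp}`: the rescaled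
radius satisfies the `E(k)` inclusion from `p = 1` on. Taking `M = 2N(A) ≥ 2` makes it `< A`.
-/

lemma nbhd_antitone {k : ℝ} (hk : 0 < k) {A : ℝ} (hA : 0 ≤ A) {n m : ℕ} (hn : 1 ≤ n)
    (hnm : n ≤ m) : nbhd k A m ⊆ nbhd k A n := fun _ hz =>
  hz.trans_le <| mul_le_mul_of_nonneg_left
    (Real.rpow_le_rpow_of_nonpos (by exact_mod_cast hn) (by exact_mod_cast hnm)
      (div_nonpos_of_nonpos_of_nonneg (by norm_num) hk.le)) hA

lemma nbhd_mul_rpow (k A : ℝ) (M n : ℕ) :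
    nbhd k (A * (M : ℝ) ^ (-(1:ℝ)/k)) n = nbhd k A (M * n) := by
  ext z
  simp only [nbhd, mem_ofPred_eq]
  rw [mul_assoc, ← Real.mul_rpow (by positivity) (by positivity), ← Nat.cast_mul]

lemma image_nbhd_mul_rpow_subset {k : ℝ} (hk : 0 < k) {φ : ℂ → ℂ} {A : ℝ} (hA : 0 ≤ A)
    {N M : ℕ} (hNM : N ≤ M) (hM : 0 < M)
    (hφ : ∀ p : ℕ, N ≤ p → φ '' nbhd k A (p+1) ⊆ nbhd k A p) {p : ℕ} (hp : 1 ≤ p) :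
    φ '' nbhd k (A * (M : ℝ) ^ (-(1:ℝ)/k)) (p+1) ⊆ nbhd k (A * (M : ℝ) ^ (-(1:ℝ)/k)) p := by
  rw [nbhd_mul_rpow, nbhd_mul_rpow]
  have hshrink : nbhd k A (M * (p+1)) ⊆ nbhd k A (M * p + 1) :=
    nbhd_antitone hk hA (by omega) (by rw [Nat.mul_succ]; omega)
  exact (image_mono hshrink).trans (hφ _ (hNM.trans (Nat.le_mul_of_pos_right M hp)))

lemma rescaled_radius_of_eventual_inclusion {k : ℝ} (hk : 0 < k) {φ : ℂ → ℂ} {A : ℝ}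
    (hA : 0 < A) {N : ℕ} (hN : 1 ≤ N)
    (hφ : ∀ p : ℕ, N ≤ p → φ '' nbhd k A (p+1) ⊆ nbhd k A p) :
    0 < A * ((2*N : ℕ) : ℝ) ^ (-(1:ℝ)/k) ∧
      A * ((2*N : ℕ) : ℝ) ^ (-(1:ℝ)/k) < A ∧
      ∀ p : ℕ, 1 ≤ p →
        φ '' nbhd k (A * ((2*N : ℕ) : ℝ) ^ (-(1:ℝ)/k)) (p+1)
          ⊆ nbhd k (A * ((2*N : ℕ) : ℝ) ^ (-(1:ℝ)/k)) p := by
  have hfactor : ((2*N : ℕ) : ℝ) ^ (-(1:ℝ)/k) < 1 :=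
    Real.rpow_lt_one_of_one_lt_of_neg (by norm_cast; omega)
      (div_neg_of_neg_of_pos (by norm_num) hk)
  exact ⟨by positivity, mul_lt_of_lt_one_right hA hfactor,
    fun _ hp => image_nbhd_mul_rpow_subset hk hA.le (by omega) (by omega) hφ hp⟩

theorem stmt3_general (k : ℝ) (hk : 0 < k) (φ : ℂ → ℂ)
    (τ : ℝ)
    (hE : ∀ A ∈ Set.Ioc (0:ℝ) τ, ∃ N : ℕ, 1 ≤ N ∧
      ∀ p : ℕ, N ≤ p → φ '' nbhd k A (p+1) ⊆ nbhd k A p) :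
    ∀ A ∈ Set.Ioo (0:ℝ) τ,
      (∃ B : ℝ, 0 < B ∧ B < A ∧
        ∀ p : ℕ, 1 ≤ p → φ '' nbhd k B (p+1) ⊆ nbhd k B p) ∧
      (∀ N : ℕ, 1 ≤ N → (∀ p : ℕ, N ≤ p → φ '' nbhd k A (p+1) ⊆ nbhd k A p) →
        0 < A * ((2*N : ℕ) : ℝ) ^ (-(1:ℝ)/k) ∧
        A * ((2*N : ℕ) : ℝ) ^ (-(1:ℝ)/k) < A ∧
        ∀ p : ℕ, 1 ≤ p →
          φ '' nbhd k (A * ((2*N : ℕ) : ℝ) ^ (-(1:ℝ)/k)) (p+1)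
            ⊆ nbhd k (A * ((2*N : ℕ) : ℝ) ^ (-(1:ℝ)/k)) p) := by
  intro A ⟨hA, hAτ⟩
  obtain ⟨N, hN, hφ⟩ := hE A ⟨hA, hAτ.le⟩
  exact ⟨⟨_, rescaled_radius_of_eventual_inclusion hk hA hN hφ⟩,
    fun _ hN hφ => rescaled_radius_of_eventual_inclusion hk hA hN hφ⟩

/-- If `φ` is holomorphic on a neighborhood of `[-1,1]` and verifies the `E(k)` property
with threshold `τ`, then for every `A ∈ (0,τ)` there exists `B ∈ (0,A)` such that
`φ([-1,1]_{k,B,p+1}) ⊆ [-1,1]_{k,B,p}` for every integer `p ≥ 1`; moreover one may take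
`B = A (2 N(A))^{-1/k}` where `N(A)` is any integer furnished by the `E(k)` property
for `A`. -/
theorem stmt3 (k : ℝ) (hk : 0 < k) (φ : ℂ → ℂ)
    (hol : ∃ U : Set ℂ, IsOpen U ∧ seg ⊆ U ∧ DifferentiableOn ℂ φ U)
    (τ : ℝ) (hτ : 0 < τ)
    (hE : ∀ A ∈ Set.Ioc (0:ℝ) τ, ∃ N : ℕ, 1 ≤ N ∧
      ∀ p : ℕ, N ≤ p → φ '' nbhd k A (p+1) ⊆ nbhd k A p) :
    ∀ A ∈ Set.Ioo (0:ℝ) τ,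
      (∃ B : ℝ, 0 < B ∧ B < A ∧
        ∀ p : ℕ, 1 ≤ p → φ '' nbhd k B (p+1) ⊆ nbhd k B p) ∧
      (∀ N : ℕ, 1 ≤ N → (∀ p : ℕ, N ≤ p → φ '' nbhd k A (p+1) ⊆ nbhd k A p) →
        0 < A * ((2*N : ℕ) : ℝ) ^ (-(1:ℝ)/k) ∧
        A * ((2*N : ℕ) : ℝ) ^ (-(1:ℝ)/k) < A ∧
        ∀ p : ℕ, 1 ≤ p →
          φ '' nbhd k (A * ((2*N : ℕ) : ℝ) ^ (-(1:ℝ)/k)) (p+1)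
            ⊆ nbhd k (A * ((2*N : ℕ) : ℝ) ^ (-(1:ℝ)/k)) p) :=
  stmt3_general k hk φ τ hE
end

section
/- Let a, b : [-1,1] → ℝ be continuous, let P(x) = Σ_{j=0}^{N₀} a_j x^j be a polynomial with real coefficients of degree N₀ ≥ 2, and let c ∈ ℝ. Assume ‖a‖₁ > 0, ‖a‖₁ · P̲′(0) < 1, and 0 < ‖b + P(0)a‖₁ + |c| < θ(P,a) − P̲(θ(P,a))/P̲′(θ(P,a)). Then the equation r = ‖a‖₁ P̲(r) + ‖b + P(0)a‖₁ + |c| has exactly two roots r₀ < r₁ in [0, +∞), and these satisfy 0 < r₀ < θ(P,a) < r₁. Moreover the function H(r) = ‖a‖₁ P̲(r) + ‖b + P(0)a‖₁ + |c| − r is strictly decreasing on [0, θ(P,a)] and strictly increasing on [θ(P,a), +∞). -/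
open Set

/-- The L¹ norm of a function on `[-1,1]`: `‖g‖₁ = ∫_{-1}^{1} |g(t)| dt`. -/
noncomputable def norm1 (g : ℝ → ℝ) : ℝ := ∫ t in (-1:ℝ)..1, |g t|

/-- The polynomial `P(x) = Σ_{j=0}^{N₀} a_j x^j`. -/
noncomputable def Pfun (co : ℕ → ℝ) (N₀ : ℕ) : ℝ → ℝ :=
  fun x => ∑ j ∈ Finset.range (N₀+1), co j * x ^ j

/-- The associated polynomial `P̲(x) = Σ_{j=1}^{N₀} |a_j| x^j`. -/
noncomputable def Pbar (co : ℕ → ℝ) (N₀ : ℕ) : ℝ → ℝ :=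
  fun x => ∑ j ∈ Finset.Icc 1 N₀, |co j| * x ^ j

/-!
`H` is convex on `[0, ∞)` with `H' (θ) = 0`, so it decreases strictly on `[0, θ]` and increases
strictly (eventually at a positive linear rate) on `[θ, ∞)`. The hypotheses say exactly that
`H 0 > 0` and `H θ < 0`: the second because `‖a‖₁ = 1 / P̲′(θ)` turns `H θ < 0` into the upper
bound on `‖b + P(0)a‖₁ + |c|`. The intermediate value theorem on each side of `θ` then gives one
root there, and strict monotonicity makes it unique.
-/

section DerivStrictMono

variable {f f' : ℝ → ℝ} {θ : ℝ}

theorem strictAntiOn_Icc_of_deriv_strictMonoOn (hf : ∀ x, HasDerivAt f (f' x) x)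
    (hf' : StrictMonoOn f' (Ici 0)) (hθ : 0 ≤ θ) (hzero : f' θ = 0) :
    StrictAntiOn f (Icc 0 θ) := by
  refine strictAntiOn_of_deriv_neg (convex_Icc 0 θ)
    (fun x _ => (hf x).continuousAt.continuousWithinAt) fun x hx => ?_
  rw [interior_Icc] at hx
  rw [(hf x).deriv, ← hzero]
  exact hf' hx.1.le hθ hx.2

theorem strictMonoOn_Ici_of_deriv_strictMonoOn (hf : ∀ x, HasDerivAt f (f' x) x)
    (hf' : StrictMonoOn f' (Ici 0)) (hθ : 0 ≤ θ) (hzero : f' θ = 0) :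
    StrictMonoOn f (Ici θ) := by
  refine strictMonoOn_of_deriv_pos (convex_Ici θ)
    (fun x _ => (hf x).continuousAt.continuousWithinAt) fun x hx => ?_
  rw [interior_Ici] at hx
  rw [(hf x).deriv, ← hzero]
  exact hf' hθ (hθ.trans hx.le) hx

/-- Past `θ + 1` the function grows at least at the positive rate `f' (θ + 1)`. -/
theorem exists_gt_pos_of_deriv_strictMonoOn (hf : ∀ x, HasDerivAt f (f' x) x)
    (hf' : StrictMonoOn f' (Ici 0)) (hθ : 0 ≤ θ) (hzero : f' θ = 0) :
    ∃ R, θ < R ∧ 0 < f R := by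
  set s := θ + 1
  have hs : 0 ≤ s := by positivity
  have hslope : 0 < f' s := hzero ▸ hf' hθ hs (lt_add_one θ)
  set R := s + (|f s| + 1) / f' s
  have hsR : s ≤ R := le_add_of_nonneg_right (by positivity)
  have hgrowth : f' s * (R - s) ≤ f R - f s :=
    (convex_Ici s).mul_sub_le_image_sub_of_le_deriv
      (fun x _ => (hf x).continuousAt.continuousWithinAt)
      (fun x _ => (hf x).differentiableAt.differentiableWithinAt)
      (fun x hx => by
        rw [interior_Ici] at hx
        rw [(hf x).deriv]
        exact (hf' hs (hs.trans hx.le) hx).le)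
      s self_mem_Ici R (mem_Ici.2 hsR) hsR
  have hRs : f' s * (R - s) = |f s| + 1 := by
    simp only [R, add_sub_cancel_left]
    field_simp
  refine ⟨R, by linarith, ?_⟩
  linarith [neg_abs_le (f s)]

theorem exists_two_roots_of_deriv_strictMonoOn (hf : ∀ x, HasDerivAt f (f' x) x)
    (hf' : StrictMonoOn f' (Ici 0)) (hθ : 0 < θ) (hzero : f' θ = 0)
    (hf0 : 0 < f 0) (hfθ : f θ < 0) :
    ∃ r₀ r₁ : ℝ, 0 < r₀ ∧ r₀ < θ ∧ θ < r₁ ∧ f r₀ = 0 ∧ f r₁ = 0 ∧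
      ∀ r : ℝ, 0 ≤ r → f r = 0 → r = r₀ ∨ r = r₁ := by
  have hcont : Continuous f := continuous_iff_continuousAt.2 fun x => (hf x).continuousAt
  obtain ⟨r₀, ⟨hr₀0, hr₀θ⟩, hr₀⟩ :=
    intermediate_value_Icc' hθ.le hcont.continuousOn (show (0:ℝ) ∈ Icc (f θ) (f 0) from
      ⟨hfθ.le, hf0.le⟩)
  obtain ⟨R, hθR, hR⟩ := exists_gt_pos_of_deriv_strictMonoOn hf hf' hθ.le hzero
  obtain ⟨r₁, ⟨hr₁θ, -⟩, hr₁⟩ :=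
    intermediate_value_Icc hθR.le hcont.continuousOn (show (0:ℝ) ∈ Icc (f θ) (f R) from
      ⟨hfθ.le, hR.le⟩)
  have hr₀pos : 0 < r₀ := hr₀0.lt_of_ne (by rintro rfl; linarith)
  have hr₀lt : r₀ < θ := hr₀θ.lt_of_ne (by rintro rfl; linarith)
  have hr₁gt : θ < r₁ := hr₁θ.lt_of_ne (by rintro rfl; linarith)
  refine ⟨r₀, r₁, hr₀pos, hr₀lt, hr₁gt, hr₀, hr₁, fun r hr hfr => ?_⟩
  rcases le_or_gt r θ with hrθ | hθr
  · exact .inl <| (strictAntiOn_Icc_of_deriv_strictMonoOn hf hf' hθ.le hzero).injOn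
      ⟨hr, hrθ⟩ ⟨hr₀pos.le, hr₀lt.le⟩ (hfr.trans hr₀.symm)
  · exact .inr <| (strictMonoOn_Ici_of_deriv_strictMonoOn hf hf' hθ.le hzero).injOn
      hθr.le hr₁gt.le (hfr.trans hr₁.symm)

end DerivStrictMono

section Pbar

variable (co : ℕ → ℝ) (N₀ : ℕ)

noncomputable def PbarDeriv : ℝ → ℝ :=
  fun x => ∑ j ∈ Finset.Icc 1 N₀, |co j| * j * x ^ (j - 1)

theorem hasDerivAt_Pbar (x : ℝ) : HasDerivAt (Pbar co N₀) (PbarDeriv co N₀ x) x := by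
  refine HasDerivAt.fun_sum fun j _ => ?_
  simpa only [mul_assoc] using (hasDerivAt_pow j x).const_mul |co j|

theorem Pbar_zero : Pbar co N₀ 0 = 0 :=
  Finset.sum_eq_zero fun j hj => by
    have hj0 : j ≠ 0 := by have := (Finset.mem_Icc.1 hj).1; omega
    rw [zero_pow hj0, mul_zero]

theorem strictMonoOn_PbarDeriv {co N₀} (hN₀ : 2 ≤ N₀) (hlead : co N₀ ≠ 0) :
    StrictMonoOn (PbarDeriv co N₀) (Ici 0) := by
  intro x hx y hy hxy
  refine Finset.sum_lt_sum (fun j _ => ?_) ⟨N₀, Finset.mem_Icc.2 ⟨by omega, le_rfl⟩, ?_⟩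
  · exact mul_le_mul_of_nonneg_left (pow_le_pow_left₀ hx hxy.le _) (by positivity)
  · have hN₀pos : (0:ℝ) < N₀ := by exact_mod_cast (by omega : 0 < N₀)
    exact mul_lt_mul_of_pos_left (pow_lt_pow_left₀ hxy hx (by omega))
      (mul_pos (abs_pos.2 hlead) hN₀pos)

end Pbar

theorem stmt4_general (a b : ℝ → ℝ)
    (N₀ : ℕ) (hN₀ : 2 ≤ N₀) (co : ℕ → ℝ) (hlead : co N₀ ≠ 0) (c : ℝ)
    (ha1 : 0 < norm1 a)
    (θ : ℝ) (hθpos : 0 < θ) (hθ : norm1 a * deriv (Pbar co N₀) θ = 1)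
    (hcond1 : 0 < norm1 (fun t => b t + Pfun co N₀ 0 * a t) + |c|)
    (hcond2 : norm1 (fun t => b t + Pfun co N₀ 0 * a t) + |c|
      < θ - Pbar co N₀ θ / deriv (Pbar co N₀) θ)
    (H : ℝ → ℝ)
    (hH : ∀ r, H r = norm1 a * Pbar co N₀ r
      + norm1 (fun t => b t + Pfun co N₀ 0 * a t) + |c| - r) :
    (∃ r₀ r₁ : ℝ, 0 < r₀ ∧ r₀ < θ ∧ θ < r₁ ∧ H r₀ = 0 ∧ H r₁ = 0 ∧
      ∀ r : ℝ, 0 ≤ r → H r = 0 → r = r₀ ∨ r = r₁) ∧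
    StrictAntiOn H (Icc 0 θ) ∧ StrictMonoOn H (Ici θ) := by
  set A := norm1 a
  set K := norm1 (fun t => b t + Pfun co N₀ 0 * a t) + |c|
  set H' := fun r => A * PbarDeriv co N₀ r - 1
  rw [(hasDerivAt_Pbar co N₀ θ).deriv] at hθ hcond2
  have hHK : ∀ r, H r = A * Pbar co N₀ r + K - r := fun r => by rw [hH]; ring
  have hH' : ∀ r, HasDerivAt H (H' r) r := fun r => by
    rw [funext hHK]
    exact (((hasDerivAt_Pbar co N₀ r).const_mul A).add_const K).fun_sub (hasDerivAt_id' r)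
  have hH'mono : StrictMonoOn H' (Ici 0) := fun x hx y hy hxy =>
    sub_lt_sub_right (mul_lt_mul_of_pos_left (strictMonoOn_PbarDeriv hN₀ hlead hx hy hxy) ha1) 1
  have hH'θ : H' θ = 0 := sub_eq_zero.2 hθ
  have hH0 : 0 < H 0 := by rwa [hHK, Pbar_zero, mul_zero, zero_add, sub_zero]
  have hHθ : H θ < 0 := by
    have hAP : A * Pbar co N₀ θ = Pbar co N₀ θ / PbarDeriv co N₀ θ := by
      rw [eq_one_div_of_mul_eq_one_left hθ, one_div_mul_eq_div]
    rw [hHK, hAP]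
    linarith
  exact ⟨exists_two_roots_of_deriv_strictMonoOn hH' hH'mono hθpos hH'θ hH0 hHθ,
    strictAntiOn_Icc_of_deriv_strictMonoOn hH' hH'mono hθpos.le hH'θ,
    strictMonoOn_Ici_of_deriv_strictMonoOn hH' hH'mono hθpos.le hH'θ⟩

/-- Under conditions (1) and (2) of the paper, the equation
`r = ‖a‖₁ P̲(r) + ‖b + P(0)a‖₁ + |c|` has exactly two nonnegative roots `r₀ < r₁`, which
satisfy `0 < r₀ < θ(P,a) < r₁`; moreover `H(r) = ‖a‖₁ P̲(r) + ‖b + P(0)a‖₁ + |c| − r` is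
strictly decreasing on `[0, θ(P,a)]` and strictly increasing on `[θ(P,a), ∞)`. -/
theorem stmt4 (a b : ℝ → ℝ)
    (ha : ContinuousOn a (Icc (-1:ℝ) 1)) (hb : ContinuousOn b (Icc (-1:ℝ) 1))
    (N₀ : ℕ) (hN₀ : 2 ≤ N₀) (co : ℕ → ℝ) (hlead : co N₀ ≠ 0) (c : ℝ)
    (ha1 : 0 < norm1 a)
    (hsmall : norm1 a * deriv (Pbar co N₀) 0 < 1)
    (θ : ℝ) (hθpos : 0 < θ) (hθ : norm1 a * deriv (Pbar co N₀) θ = 1)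
    (hcond1 : 0 < norm1 (fun t => b t + Pfun co N₀ 0 * a t) + |c|)
    (hcond2 : norm1 (fun t => b t + Pfun co N₀ 0 * a t) + |c|
      < θ - Pbar co N₀ θ / deriv (Pbar co N₀) θ)
    (H : ℝ → ℝ)
    (hH : ∀ r, H r = norm1 a * Pbar co N₀ r
      + norm1 (fun t => b t + Pfun co N₀ 0 * a t) + |c| - r) :
    (∃ r₀ r₁ : ℝ, 0 < r₀ ∧ r₀ < θ ∧ θ < r₁ ∧ H r₀ = 0 ∧ H r₁ = 0 ∧
      ∀ r : ℝ, 0 ≤ r → H r = 0 → r = r₀ ∨ r = r₁) ∧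
    StrictAntiOn H (Icc 0 θ) ∧ StrictMonoOn H (Ici θ) :=
  stmt4_general a b N₀ hN₀ co hlead c ha1 θ hθpos hθ hcond1 hcond2 H hH
end

section
/- Let a, b : [-1,1] → ℝ be continuous, ψ : [-1,1] → [-1,1] continuous, P(x) = Σ_{j=0}^{N₀} a_j x^j a polynomial with real coefficients of degree N₀ ≥ 2, d ∈ [-1,1] and c ∈ ℝ. Suppose r₀ ≥ 0 satisfies r₀ = ‖a‖₁ P̲(r₀) + ‖b + P(0)a‖₁ + |c|. Then for every continuous f : [-1,1] → ℝ with ‖f‖_{∞,[-1,1]} ≤ r₀, the function T(f) defined by T(f)(x) := ∫_d^x a(t) P(f(ψ(t))) dt + ∫_d^x b(t) dt + c satisfies ‖T(f)‖_{∞,[-1,1]} ≤ r₀; that is, the closed ball of radius r₀ centered at 0 in (C⁰([-1,1]), ‖·‖_∞) is stable under T. -/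
/-!
Split the integrand as `a·P(f∘ψ) + b = a·(P(f∘ψ) - P(0)) + (b + P(0)·a)`. On the ball of radius
`r₀` one has `|P(y) - P(0)| ≤ P̲(r₀)`, and `|∫_d^x u| ≤ ‖u‖₁` for `d, x ∈ [-1,1]`,
so `|T(f)(x)| ≤ ‖a‖₁ P̲(r₀) + ‖b + P(0)a‖₁ + |c|`, which is `r₀` by the fixed-point equation.
-/

open Set

open MeasureTheory

section Polynomial

variable (co : ℕ → ℝ) (N₀ : ℕ)

theorem continuous_Pfun : Continuous (Pfun co N₀) :=
  continuous_finsetSum _ fun j _ => continuous_const.mul (continuous_pow j)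

theorem Pfun_sub_Pfun_zero (y : ℝ) :
    Pfun co N₀ y - Pfun co N₀ 0 = ∑ j ∈ Finset.Icc 1 N₀, co j * y ^ j := by
  have hsplit (z : ℝ) : Pfun co N₀ z = co 0 + ∑ j ∈ Finset.Icc 1 N₀, co j * z ^ j := by
    rw [Pfun, Finset.range_eq_Ico, Finset.sum_eq_sum_Ico_succ_bot (Nat.succ_pos N₀), pow_zero,
      mul_one]
    rfl
  have hzero : ∑ j ∈ Finset.Icc 1 N₀, co j * (0:ℝ) ^ j = 0 := Finset.sum_eq_zero fun j hj => by
    rw [zero_pow (Nat.one_le_iff_ne_zero.1 (Finset.mem_Icc.1 hj).1), mul_zero]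
  rw [hsplit y, hsplit 0, hzero]
  ring

theorem abs_Pfun_sub_Pfun_zero_le {r y : ℝ} (hy : |y| ≤ r) :
    |Pfun co N₀ y - Pfun co N₀ 0| ≤ Pbar co N₀ r := by
  rw [Pfun_sub_Pfun_zero]
  refine (Finset.abs_sum_le_sum_abs _ _).trans (Finset.sum_le_sum fun j _ => ?_)
  rw [abs_mul, abs_pow]
  exact mul_le_mul_of_nonneg_left (pow_le_pow_left₀ (abs_nonneg y) hy j) (abs_nonneg _)

end Polynomial

theorem abs_intervalIntegral_le_integral_abs_of_mem_Icc {g : ℝ → ℝ} {a b d x : ℝ}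
    (hg : IntervalIntegrable g volume a b) (hd : d ∈ Icc a b) (hx : x ∈ Icc a b) :
    |∫ t in d..x, g t| ≤ ∫ t in a..b, |g t| := by
  have hab : a ≤ b := hd.1.trans hd.2
  calc |∫ t in d..x, g t| ≤ |∫ t in d..x, (|g t|)| := by
        simpa only [Real.norm_eq_abs] using
          intervalIntegral.norm_integral_le_abs_integral_norm (f := g)
    _ ≤ |∫ t in a..b, (|g t|)| := by
        refine intervalIntegral.abs_integral_mono_interval
          (uIoc_subset_uIoc_of_uIcc_subset_uIcc ?_) (ae_of_all _ fun t => abs_nonneg _) hg.abs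
        rw [uIcc_of_le hab]
        exact uIcc_subset_Icc hd hx
    _ = ∫ t in a..b, |g t| :=
        abs_of_nonneg (intervalIntegral.integral_nonneg hab fun t _ => abs_nonneg _)

theorem norm1_le_norm1_mul {g a : ℝ → ℝ} {M : ℝ}
    (hg : ContinuousOn g (Icc (-1:ℝ) 1)) (ha : ContinuousOn a (Icc (-1:ℝ) 1))
    (hga : ∀ t ∈ Icc (-1:ℝ) 1, |g t| ≤ |a t| * M) :
    norm1 g ≤ norm1 a * M := by
  rw [norm1, norm1, ← intervalIntegral.integral_mul_const]
  refine intervalIntegral.integral_mono_on (by norm_num) ?_ ?_ hga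
  · exact hg.abs.intervalIntegrable_of_Icc (by norm_num)
  · exact (ha.abs.mul continuousOn_const).intervalIntegrable_of_Icc (by norm_num)

theorem stmt5_general (a b ψ : ℝ → ℝ)
    (ha : ContinuousOn a (Icc (-1:ℝ) 1)) (hb : ContinuousOn b (Icc (-1:ℝ) 1))
    (hψ : ContinuousOn ψ (Icc (-1:ℝ) 1))
    (hψmap : MapsTo ψ (Icc (-1:ℝ) 1) (Icc (-1:ℝ) 1))
    (N₀ : ℕ) (co : ℕ → ℝ)
    (d : ℝ) (hd : d ∈ Icc (-1:ℝ) 1) (c : ℝ)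
    (r₀ : ℝ)
    (hroot : r₀ = norm1 a * Pbar co N₀ r₀
      + norm1 (fun t => b t + Pfun co N₀ 0 * a t) + |c|)
    (f : ℝ → ℝ) (hf : ContinuousOn f (Icc (-1:ℝ) 1))
    (hfb : ∀ x ∈ Icc (-1:ℝ) 1, |f x| ≤ r₀) :
    ∀ x ∈ Icc (-1:ℝ) 1,
      |(∫ t in d..x, a t * Pfun co N₀ (f (ψ t))) + (∫ t in d..x, b t) + c| ≤ r₀ := by
  intro x hx
  set g : ℝ → ℝ := fun t => a t * (Pfun co N₀ (f (ψ t)) - Pfun co N₀ 0)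
  set h : ℝ → ℝ := fun t => b t + Pfun co N₀ 0 * a t
  have hPfψ : ContinuousOn (fun t => Pfun co N₀ (f (ψ t))) (Icc (-1:ℝ) 1) :=
    (continuous_Pfun co N₀).comp_continuousOn (hf.comp hψ hψmap)
  have hg : ContinuousOn g (Icc (-1:ℝ) 1) := ha.mul (hPfψ.sub continuousOn_const)
  have hh : ContinuousOn h (Icc (-1:ℝ) 1) := hb.add (continuousOn_const.mul ha)
  have hint (u : ℝ → ℝ) (hu : ContinuousOn u (Icc (-1:ℝ) 1)) :
      IntervalIntegrable u volume d x :=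
    (hu.mono (uIcc_subset_Icc hd hx)).intervalIntegrable
  have hsplit : (∫ t in d..x, a t * Pfun co N₀ (f (ψ t))) + (∫ t in d..x, b t)
      = (∫ t in d..x, g t) + (∫ t in d..x, h t) := by
    rw [← intervalIntegral.integral_add (hint (fun t => a t * Pfun co N₀ (f (ψ t))) (ha.mul hPfψ))
        (hint b hb), ← intervalIntegral.integral_add (hint g hg) (hint h hh)]
    congr 1 with t
    ring
  have hg_le : norm1 g ≤ norm1 a * Pbar co N₀ r₀ := norm1_le_norm1_mul hg ha fun t ht => by
    rw [abs_mul]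
    exact mul_le_mul_of_nonneg_left
      (abs_Pfun_sub_Pfun_zero_le co N₀ (hfb _ (hψmap ht))) (abs_nonneg _)
  have hbound (u : ℝ → ℝ) (hu : ContinuousOn u (Icc (-1:ℝ) 1)) :
      |∫ t in d..x, u t| ≤ norm1 u :=
    abs_intervalIntegral_le_integral_abs_of_mem_Icc (hu.intervalIntegrable_of_Icc (by norm_num))
      hd hx
  calc |(∫ t in d..x, a t * Pfun co N₀ (f (ψ t))) + (∫ t in d..x, b t) + c|
      = |(∫ t in d..x, g t) + (∫ t in d..x, h t) + c| := by rw [hsplit]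
    _ ≤ |∫ t in d..x, g t| + |∫ t in d..x, h t| + |c| := abs_add_three _ _ _
    _ ≤ norm1 a * Pbar co N₀ r₀ + norm1 h + |c| := by
        gcongr
        · exact (hbound g hg).trans hg_le
        · exact hbound h hh
    _ = r₀ := hroot.symm

/-- If `r₀ ≥ 0` satisfies `r₀ = ‖a‖₁ P̲(r₀) + ‖b + P(0)a‖₁ + |c|`, then the closed ball
of radius `r₀` in `(C⁰([-1,1]), ‖·‖_∞)` is stable under the operator
`T(f)(x) = ∫_d^x a(t) P(f(ψ(t))) dt + ∫_d^x b(t) dt + c`. -/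
theorem stmt5 (a b ψ : ℝ → ℝ)
    (ha : ContinuousOn a (Icc (-1:ℝ) 1)) (hb : ContinuousOn b (Icc (-1:ℝ) 1))
    (hψ : ContinuousOn ψ (Icc (-1:ℝ) 1))
    (hψmap : MapsTo ψ (Icc (-1:ℝ) 1) (Icc (-1:ℝ) 1))
    (N₀ : ℕ) (hN₀ : 2 ≤ N₀) (co : ℕ → ℝ) (hlead : co N₀ ≠ 0)
    (d : ℝ) (hd : d ∈ Icc (-1:ℝ) 1) (c : ℝ)
    (r₀ : ℝ) (hr₀ : 0 ≤ r₀)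
    (hroot : r₀ = norm1 a * Pbar co N₀ r₀
      + norm1 (fun t => b t + Pfun co N₀ 0 * a t) + |c|)
    (f : ℝ → ℝ) (hf : ContinuousOn f (Icc (-1:ℝ) 1))
    (hfb : ∀ x ∈ Icc (-1:ℝ) 1, |f x| ≤ r₀) :
    ∀ x ∈ Icc (-1:ℝ) 1,
      |(∫ t in d..x, a t * Pfun co N₀ (f (ψ t))) + (∫ t in d..x, b t) + c| ≤ r₀ :=
  stmt5_general a b ψ ha hb hψ hψmap N₀ co d hd c r₀ hroot f hf hfb
end

section
/- Let a : [-1,1] → ℝ be continuous, ψ : [-1,1] → [-1,1] continuous, P(x) = Σ_{j=0}^{N₀} a_j x^j a polynomial with real coefficients of degree N₀ ≥ 2, d ∈ [-1,1], c ∈ ℝ, b : [-1,1] → ℝ continuous, and r₀ > 0. Then for all continuous u, v : [-1,1] → ℝ with ‖u‖_{∞,[-1,1]} ≤ r₀ and ‖v‖_{∞,[-1,1]} ≤ r₀, the operator T(f)(x) := ∫_d^x a(t) P(f(ψ(t))) dt + ∫_d^x b(t) dt + c satisfies ‖T(v) − T(u)‖_{∞,[-1,1]} ≤ ‖a‖₁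 · P̲′(r₀) · ‖v − u‖_{∞,[-1,1]}. Moreover, if ‖a‖₁ > 0, ‖a‖₁ P̲′(0) < 1, and 0 < r₀ < θ(P,a), then 0 < ‖a‖₁ P̲′(r₀) < 1, so T is a contraction on the closed ball of radius r₀. -/
/-!
On `[-r, r]` each coefficient of `P′` is dominated in absolute value by the corresponding
coefficient of `P̲′`, so `|P′| ≤ P̲′(r)` there and, by the mean value theorem, `P` is
`P̲′(r)`-Lipschitz on `[-r, r]`. In `T(v) − T(u)` the terms with `b` and `c` cancel, and the
remaining integral is bounded by `‖a‖₁ · P̲′(r₀) · ‖v − u‖_∞`. Since `P̲′` has nonnegative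
coefficients and a nonzero coefficient in degree `N₀ − 1 ≥ 1`, it is strictly increasing on
`[0, ∞)`, which gives `0 ≤ ‖a‖₁ P̲′(0) < ‖a‖₁ P̲′(r₀) < ‖a‖₁ P̲′(θ) = 1`.
-/

open Set

/-- The sup norm of a function on `[-1,1]`: `‖g‖_{∞,[-1,1]} = sup_{t ∈ [-1,1]} |g t|`. -/
noncomputable def supNorm (g : ℝ → ℝ) : ℝ := sSup ((fun x => |g x|) '' Icc (-1:ℝ) 1)

open Finset in
lemma sum_range_succ_eq_sum_Icc_one {M : Type*} [AddCommMonoid M] (f : ℕ → M) (hf : f 0 = 0)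
    (n : ℕ) : ∑ j ∈ range (n + 1), f j = ∑ j ∈ Icc 1 n, f j := by
  rw [Nat.range_succ_eq_Icc_zero, ← Finset.insert_Icc_add_one_left_eq_Icc n.zero_le,
    sum_insert (by simp), hf, zero_add, zero_add]

section Polynomial

variable (co : ℕ → ℝ) (N₀ : ℕ)

lemma hasDerivAt_Pfun (x : ℝ) :
    HasDerivAt (Pfun co N₀) (∑ j ∈ Finset.range (N₀ + 1), co j * (j * x ^ (j - 1))) x :=
  HasDerivAt.fun_sum fun j _ => (hasDerivAt_pow j x).const_mul _

lemma deriv_Pbar (x : ℝ) :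
    deriv (Pbar co N₀) x = ∑ j ∈ Finset.Icc 1 N₀, |co j| * (j * x ^ (j - 1)) :=
  (HasDerivAt.fun_sum fun j _ => (hasDerivAt_pow j x).const_mul _).deriv

variable {co N₀}

lemma deriv_Pbar_nonneg {r : ℝ} (hr : 0 ≤ r) : 0 ≤ deriv (Pbar co N₀) r := by
  rw [deriv_Pbar]
  exact Finset.sum_nonneg fun j _ => by positivity

lemma abs_deriv_Pfun_le {r x : ℝ} (hx : |x| ≤ r) :
    |deriv (Pfun co N₀) x| ≤ deriv (Pbar co N₀) r := by
  rw [(hasDerivAt_Pfun co N₀ x).deriv, deriv_Pbar, ← sum_range_succ_eq_sum_Icc_one _ (by simp)]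
  refine (Finset.abs_sum_le_sum_abs _ _).trans (Finset.sum_le_sum fun j _ => ?_)
  rw [abs_mul, abs_mul, abs_pow, Nat.abs_cast]
  gcongr

lemma abs_Pfun_sub_le {r y z : ℝ} (hy : |y| ≤ r) (hz : |z| ≤ r) :
    |Pfun co N₀ y - Pfun co N₀ z| ≤ deriv (Pbar co N₀) r * |y - z| :=
  Convex.norm_image_sub_le_of_norm_deriv_le (s := Icc (-r) r)
    (fun x _ => (hasDerivAt_Pfun co N₀ x).differentiableAt)
    (fun _ hx => abs_deriv_Pfun_le (abs_le.2 hx)) (convex_Icc _ _) (abs_le.1 hz) (abs_le.1 hy)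

lemma strictMonoOn_deriv_Pbar (hN₀ : 2 ≤ N₀) (hlead : co N₀ ≠ 0) :
    StrictMonoOn (deriv (Pbar co N₀)) (Ici 0) := by
  intro r (hr : 0 ≤ r) θ _ hrθ
  simp only [deriv_Pbar]
  refine Finset.sum_lt_sum (fun j _ => by gcongr) ⟨N₀, Finset.mem_Icc.2 ⟨by omega, le_rfl⟩, ?_⟩
  have : N₀ - 1 ≠ 0 := by omega
  have : (0 : ℝ) < N₀ := by exact_mod_cast (by omega : 0 < N₀)
  gcongr

end Polynomial

section Norms

lemma abs_le_supNorm {g : ℝ → ℝ} (hg : ContinuousOn g (Icc (-1) 1)) {x : ℝ}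
    (hx : x ∈ Icc (-1 : ℝ) 1) : |g x| ≤ supNorm g :=
  le_csSup (isCompact_Icc.image_of_continuousOn hg.abs).bddAbove ⟨x, hx, rfl⟩

lemma supNorm_le {g : ℝ → ℝ} {C : ℝ} (h : ∀ x ∈ Icc (-1 : ℝ) 1, |g x| ≤ C) : supNorm g ≤ C :=
  csSup_le ((nonempty_Icc.2 (by norm_num)).image _) (by rintro _ ⟨x, hx, rfl⟩; exact h x hx)

lemma abs_integral_le_norm1 {f : ℝ → ℝ} (hf : ContinuousOn f (Icc (-1) 1)) {d x : ℝ}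
    (hd : d ∈ Icc (-1 : ℝ) 1) (hx : x ∈ Icc (-1 : ℝ) 1) : |∫ t in d..x, f t| ≤ norm1 f := by
  have hsub : uIoc d x ⊆ uIoc (-1) 1 :=
    uIoc_subset_uIoc_of_uIcc_subset_uIcc (uIcc_subset_uIcc (by simpa using hd) (by simpa using hx))
  calc |∫ t in d..x, f t| ≤ |(∫ t in d..x, |f t|)| :=
        intervalIntegral.norm_integral_le_abs_integral_norm (f := f)
    _ ≤ |(∫ t in (-1 : ℝ)..1, |f t|)| :=
        intervalIntegral.abs_integral_mono_interval hsub (.of_forall fun t => abs_nonneg _)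
          (hf.abs.intervalIntegrable_of_Icc (by norm_num))
    _ = norm1 f := abs_of_nonneg (intervalIntegral.integral_nonneg (by norm_num) fun t _ => abs_nonneg _)

lemma norm1_mul_le {a g : ℝ → ℝ} (ha : ContinuousOn a (Icc (-1) 1))
    (hg : ContinuousOn g (Icc (-1) 1)) {K : ℝ} (hK : ∀ t ∈ Icc (-1 : ℝ) 1, |g t| ≤ K) :
    norm1 (fun t => a t * g t) ≤ norm1 a * K := by
  rw [norm1, norm1, ← intervalIntegral.integral_mul_const]
  refine intervalIntegral.integral_mono_on (by norm_num)
    ((ha.mul hg).abs.intervalIntegrable_of_Icc (by norm_num))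
    ((ha.abs.mul continuousOn_const).intervalIntegrable_of_Icc (by norm_num)) fun t ht => ?_
  rw [abs_mul]
  gcongr
  exact hK t ht

end Norms

theorem stmt6_general (a b ψ : ℝ → ℝ)
    (ha : ContinuousOn a (Icc (-1:ℝ) 1))
    (hψ : ContinuousOn ψ (Icc (-1:ℝ) 1))
    (hψmap : MapsTo ψ (Icc (-1:ℝ) 1) (Icc (-1:ℝ) 1))
    (N₀ : ℕ) (hN₀ : 2 ≤ N₀) (co : ℕ → ℝ) (hlead : co N₀ ≠ 0)
    (d : ℝ) (hd : d ∈ Icc (-1:ℝ) 1) (c : ℝ)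
    (r₀ : ℝ) (hr₀ : 0 < r₀)
    (u v : ℝ → ℝ)
    (hu : ContinuousOn u (Icc (-1:ℝ) 1)) (hv : ContinuousOn v (Icc (-1:ℝ) 1))
    (hub : ∀ x ∈ Icc (-1:ℝ) 1, |u x| ≤ r₀) (hvb : ∀ x ∈ Icc (-1:ℝ) 1, |v x| ≤ r₀) :
    supNorm (fun x =>
        ((∫ t in d..x, a t * Pfun co N₀ (v (ψ t))) + (∫ t in d..x, b t) + c)
        - ((∫ t in d..x, a t * Pfun co N₀ (u (ψ t))) + (∫ t in d..x, b t) + c))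
      ≤ norm1 a * deriv (Pbar co N₀) r₀ * supNorm (fun x => v x - u x) ∧
    (0 < norm1 a → norm1 a * deriv (Pbar co N₀) 0 < 1 →
      ∀ θ : ℝ, 0 < θ → norm1 a * deriv (Pbar co N₀) θ = 1 → r₀ < θ →
        0 < norm1 a * deriv (Pbar co N₀) r₀ ∧ norm1 a * deriv (Pbar co N₀) r₀ < 1) := by
  have hP : Continuous (Pfun co N₀) := continuous_iff_continuousAt.2 fun x =>
    (hasDerivAt_Pfun co N₀ x).continuousAt
  have hPv : ContinuousOn (fun t => Pfun co N₀ (v (ψ t))) (Icc (-1) 1) :=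
    hP.comp_continuousOn (hv.comp hψ hψmap)
  have hPu : ContinuousOn (fun t => Pfun co N₀ (u (ψ t))) (Icc (-1) 1) :=
    hP.comp_continuousOn (hu.comp hψ hψmap)
  have haPv : ContinuousOn (fun t => a t * Pfun co N₀ (v (ψ t))) (Icc (-1) 1) := ha.mul hPv
  have haPu : ContinuousOn (fun t => a t * Pfun co N₀ (u (ψ t))) (Icc (-1) 1) := ha.mul hPu
  have hmono := strictMonoOn_deriv_Pbar hN₀ hlead
  refine ⟨supNorm_le fun x hx => ?_, fun hnorm _ θ _ hθ hr₀θ => ?_⟩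
  · have hsub : uIcc d x ⊆ Icc (-1) 1 := uIcc_subset_Icc hd hx
    rw [add_sub_add_right_eq_sub, add_sub_add_right_eq_sub,
      ← intervalIntegral.integral_sub (haPv.mono hsub).intervalIntegrable
        (haPu.mono hsub).intervalIntegrable]
    simp_rw [← mul_sub]
    calc _ ≤ norm1 (fun t => a t * (Pfun co N₀ (v (ψ t)) - Pfun co N₀ (u (ψ t)))) :=
          abs_integral_le_norm1 (ha.mul (hPv.sub hPu)) hd hx
      _ ≤ norm1 a * (deriv (Pbar co N₀) r₀ * supNorm (fun x => v x - u x)) :=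
          norm1_mul_le ha (hPv.sub hPu) fun t ht =>
            (abs_Pfun_sub_le (hvb _ (hψmap ht)) (hub _ (hψmap ht))).trans <|
              mul_le_mul_of_nonneg_left (abs_le_supNorm (hv.sub hu) (hψmap ht))
                (deriv_Pbar_nonneg hr₀.le)
      _ = _ := (mul_assoc ..).symm
  · have hpos : 0 < deriv (Pbar co N₀) r₀ :=
      (deriv_Pbar_nonneg le_rfl).trans_lt (hmono (mem_Ici.2 le_rfl) hr₀.le hr₀)
    have hlt : deriv (Pbar co N₀) r₀ < deriv (Pbar co N₀) θ :=
      hmono hr₀.le (hr₀.trans hr₀θ).le hr₀θ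
    exact ⟨mul_pos hnorm hpos, hθ ▸ mul_lt_mul_of_pos_left hlt hnorm⟩

/-- The operator `T(f)(x) = ∫_d^x a(t) P(f(ψ(t))) dt + ∫_d^x b(t) dt + c` satisfies, on
the closed ball of radius `r₀`, the Lipschitz estimate
`‖T(v) − T(u)‖_∞ ≤ ‖a‖₁ · P̲′(r₀) · ‖v − u‖_∞`; and if moreover `‖a‖₁ > 0`,
`‖a‖₁ P̲′(0) < 1` and `0 < r₀ < θ(P,a)`, then `0 < ‖a‖₁ P̲′(r₀) < 1`, so `T` is a
contraction on that ball. -/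
theorem stmt6 (a b ψ : ℝ → ℝ)
    (ha : ContinuousOn a (Icc (-1:ℝ) 1)) (hb : ContinuousOn b (Icc (-1:ℝ) 1))
    (hψ : ContinuousOn ψ (Icc (-1:ℝ) 1))
    (hψmap : MapsTo ψ (Icc (-1:ℝ) 1) (Icc (-1:ℝ) 1))
    (N₀ : ℕ) (hN₀ : 2 ≤ N₀) (co : ℕ → ℝ) (hlead : co N₀ ≠ 0)
    (d : ℝ) (hd : d ∈ Icc (-1:ℝ) 1) (c : ℝ)
    (r₀ : ℝ) (hr₀ : 0 < r₀)
    (u v : ℝ → ℝ)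
    (hu : ContinuousOn u (Icc (-1:ℝ) 1)) (hv : ContinuousOn v (Icc (-1:ℝ) 1))
    (hub : ∀ x ∈ Icc (-1:ℝ) 1, |u x| ≤ r₀) (hvb : ∀ x ∈ Icc (-1:ℝ) 1, |v x| ≤ r₀) :
    supNorm (fun x =>
        ((∫ t in d..x, a t * Pfun co N₀ (v (ψ t))) + (∫ t in d..x, b t) + c)
        - ((∫ t in d..x, a t * Pfun co N₀ (u (ψ t))) + (∫ t in d..x, b t) + c))
      ≤ norm1 a * deriv (Pbar co N₀) r₀ * supNorm (fun x => v x - u x) ∧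
    (0 < norm1 a → norm1 a * deriv (Pbar co N₀) 0 < 1 →
      ∀ θ : ℝ, 0 < θ → norm1 a * deriv (Pbar co N₀) θ = 1 → r₀ < θ →
        0 < norm1 a * deriv (Pbar co N₀) r₀ ∧ norm1 a * deriv (Pbar co N₀) r₀ < 1) :=
  stmt6_general a b ψ ha hψ hψmap N₀ hN₀ co hlead d hd c r₀ hr₀ u v hu hv hub hvb
end

section
/- Let k > 0, r₀ ≥ 0, N₀ ≥ 2 an integer, Q(x) = Σ_{j=1}^{N₀} c_j x^j with all c_j ≥ 0, and M_a, M_b ≥ 0. Suppose C ≥ 1 satisfies M_a · Q(r₀ + x) + M_b ≤ C · (max(x,1))^{N₀} for all x ≥ 0. For s > 0 define the sequence (ω_{n,s})_{n ≥ 1} by ω_{1,s} := 1 and ω_{n+1,s} := M_a · Q(r₀ + s n^{-1/k} ω_{n,s}) + M_b. Then for every s ∈ (0, 1/C] and every integer n ≥ 1, one has 0 ≤ ω_{n,s} ≤ C. -/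
/-! With `s ≤ 1/C` and `n ^ (-1/k) ≤ 1`, the argument `x = s n^{-1/k} ω_n` of `Q` stays in
`[0, 1]` as long as `ω_n ∈ [0, C]`; there `max x 1 = 1`, so the domination hypothesis gives
`ω_{n+1} ≤ C`, while nonnegative coefficients give `ω_{n+1} ≥ 0`. Induct on `n`. -/

open Set

lemma sum_mul_pow_nonneg {c : ℕ → ℝ} (hc : ∀ j, 0 ≤ c j) (J : Finset ℕ) {x : ℝ} (hx : 0 ≤ x) :
    0 ≤ ∑ j ∈ J, c j * x ^ j :=
  Finset.sum_nonneg fun j _ => mul_nonneg (hc j) (pow_nonneg hx j)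

lemma rpow_neg_one_div_le_one {x k : ℝ} (hx : 1 ≤ x) (hk : 0 ≤ k) : x ^ (-1 / k) ≤ 1 :=
  Real.rpow_le_one_of_one_le_of_nonpos hx (div_nonpos_of_nonpos_of_nonneg (by norm_num) hk)

lemma mul_mul_mem_Icc_zero_one {s t w C : ℝ} (hs : 0 ≤ s) (ht : t ∈ Icc 0 1) (hw : w ∈ Icc 0 C)
    (hsC : s * C ≤ 1) : s * t * w ∈ Icc 0 1 := by
  obtain ⟨ht0, ht1⟩ := ht
  obtain ⟨hw0, hwC⟩ := hw
  refine ⟨by positivity, ?_⟩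
  calc s * t * w ≤ s * 1 * C := by gcongr
    _ ≤ 1 := by rwa [mul_one]

theorem stmt8_general (k : ℝ) (hk : 0 < k) (r₀ : ℝ) (hr₀ : 0 ≤ r₀)
    (N₀ : ℕ)
    (cj : ℕ → ℝ) (hcj : ∀ j, 0 ≤ cj j)
    (Q : ℝ → ℝ) (hQ : ∀ x, Q x = ∑ j ∈ Finset.Icc 1 N₀, cj j * x ^ j)
    (Ma Mb : ℝ) (hMa : 0 ≤ Ma) (hMb : 0 ≤ Mb)
    (C : ℝ) (hC : 1 ≤ C)
    (hCQ : ∀ x : ℝ, 0 ≤ x → Ma * Q (r₀ + x) + Mb ≤ C * (max x 1) ^ N₀)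
    (s : ℝ) (hs : 0 < s) (hsC : s ≤ 1 / C)
    (ω : ℕ → ℝ) (hω1 : ω 1 = 1)
    (hωrec : ∀ n : ℕ, 1 ≤ n →
      ω (n+1) = Ma * Q (r₀ + s * (n:ℝ) ^ (-(1:ℝ)/k) * ω n) + Mb) :
    ∀ n : ℕ, 1 ≤ n → 0 ≤ ω n ∧ ω n ≤ C := by
  have hsC' : s * C ≤ 1 := by rwa [le_div_iff₀ (by linarith)] at hsC
  intro n hn
  induction n, hn using Nat.le_induction with
  | base => exact ⟨by rw [hω1]; norm_num, by rwa [hω1]⟩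
  | succ m hm ih =>
    have hpow : (m : ℝ) ^ (-(1:ℝ) / k) ∈ Icc 0 1 :=
      ⟨by positivity, rpow_neg_one_div_le_one (by exact_mod_cast hm) hk.le⟩
    obtain ⟨hx0, hx1⟩ := mul_mul_mem_Icc_zero_one hs.le hpow ih hsC'
    have hQ0 : 0 ≤ Q (r₀ + s * (m:ℝ) ^ (-(1:ℝ)/k) * ω m) := by
      rw [hQ]; exact sum_mul_pow_nonneg hcj _ (by linarith)
    rw [hωrec m hm]
    refine ⟨by positivity, ?_⟩
    simpa [max_eq_right hx1] using hCQ _ hx0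

/-- Boundedness of the auxiliary recurrent sequence `ω(s)` (estimate (5) of the paper):
if `C ≥ 1` dominates via `M_a Q(r₀+x) + M_b ≤ C (max(x,1))^{N₀}` and `0 < s ≤ 1/C`,
then the sequence defined by `ω₁ = 1`, `ω_{n+1} = M_a Q(r₀ + s n^{-1/k} ω_n) + M_b`
satisfies `0 ≤ ω_n ≤ C` for all `n ≥ 1`. -/
theorem stmt8 (k : ℝ) (hk : 0 < k) (r₀ : ℝ) (hr₀ : 0 ≤ r₀)
    (N₀ : ℕ) (hN₀ : 2 ≤ N₀)
    (cj : ℕ → ℝ) (hcj : ∀ j, 0 ≤ cj j)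
    (Q : ℝ → ℝ) (hQ : ∀ x, Q x = ∑ j ∈ Finset.Icc 1 N₀, cj j * x ^ j)
    (Ma Mb : ℝ) (hMa : 0 ≤ Ma) (hMb : 0 ≤ Mb)
    (C : ℝ) (hC : 1 ≤ C)
    (hCQ : ∀ x : ℝ, 0 ≤ x → Ma * Q (r₀ + x) + Mb ≤ C * (max x 1) ^ N₀)
    (s : ℝ) (hs : 0 < s) (hsC : s ≤ 1 / C)
    (ω : ℕ → ℝ) (hω1 : ω 1 = 1)
    (hωrec : ∀ n : ℕ, 1 ≤ n →
      ω (n+1) = Ma * Q (r₀ + s * (n:ℝ) ^ (-(1:ℝ)/k) * ω n) + Mb) :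
    ∀ n : ℕ, 1 ≤ n → 0 ≤ ω n ∧ ω n ≤ C :=
  stmt8_general k hk r₀ hr₀ N₀ cj hcj Q hQ Ma Mb hMa hMb C hC hCQ s hs hsC ω hω1 hωrec
end

section
/- Let k > 0, μ > 0, and let a, b, ψ be holomorphic on [-1,1] + B(0,μ) ⊂ ℂ with a, b real-valued on [-1,1], ψ verifying the E(k) property with threshold τ_ψ ≤ μ. Let P(x) = Σ_{j=0}^{N₀} a_j x^j be a real polynomial of degree N₀ ≥ 2, d ∈ [-1,1], c ∈ ℝ, with ‖a‖₁ > 0, ‖a‖₁ P̲′(0) < 1, 0 < ‖b + P(0)a‖₁ + |c| < θ(P,a) − P̲(θ(P,a))/P̲′(θ(P,a)), and let r₀ be the smallest nonnegative root of r = ‖a‖₁ P̲(r) + ‖b + P(0)a‖₁ + |c|. Let ν ∈ (0, min(μ, τ_ψ)) satisfy ψ([-1,1]_{k,ν,n+1}) ⊆ [-1,1]_{k,ν,n} for all n ≥ 1. Define F₁ ≡ 0 on [-1,1]_{k,ν,1} and F_{n+1}(z) := c + ∫_{[d,z]} a(ζ) P(F_n(ψ(ζ))) dζ + ∫_{[d,z]}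 b(ζ) dζ, the integrals taken along the straight segment from d to z. Set M_a := ‖a‖_{∞,[-1,1]+B(0,μ/2)}, M_b := ‖b + P(0)a‖_{∞,[-1,1]+B(0,μ/2)}, and for s ∈ [0, ν/2] define ω_{1,s} := 1 and ω_{n+1,s} := M_a P̲(r₀ + s n^{-1/k} ω_{n,s}) + M_b. Suppose C > max(2/ν, 1) satisfies M_a P̲(r₀ + x) + M_b ≤ C (max(x,1))^{N₀} for all x ≥ 0, and suppose s₁ ∈ (0, 1/C] satisfies ψ([-1,1]_{k,s₁,n+1}) ⊆ [-1,1]_{k,s₁,n} for all n ≥ 1. Then for every n ≥ 1, F_n is well defined and holomorphic on [-1,1]_{k,ν,n}, and F_n([-1,1]_{k,s₁,n}) ⊆ {w ∈ ℂ : dist(w, [-r₀,r₀]) ≤ ω_{n,s₁} s₁ n^{-1/k}} ⊆ {w ∈ ℂ : dist(w, [-r₀,r₀]) ≤ C s₁ n^{-1/k}}. -/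
open Set

/-- The polynomial `P` extended to `ℂ`. -/
noncomputable def PfunC (co : ℕ → ℝ) (N₀ : ℕ) : ℂ → ℂ :=
  fun z => ∑ j ∈ Finset.range (N₀+1), (co j : ℂ) * z ^ j

/-- Integral of `f` along the straight segment from `w` to `z` in `ℂ`. -/
noncomputable def segInt (f : ℂ → ℂ) (w z : ℂ) : ℂ :=
  (z - w) * ∫ t in (0:ℝ)..1, f (w + (t:ℂ) * (z - w))

/-!
Induction on `n`. The integrand `g = A · P(F_n ∘ Ψ) + B` of the recursion is holomorphic on the
convex set `[-1,1]_{k,ν,n+1}`, so its segment integral from `d` is a primitive of `g` there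
(differentiation under the integral sign). Since `Ψ` maps `[-1,1]` into itself, on `[-1,1]` all
functions are real and `|F_n ∘ Ψ| ≤ r₀`, whence
`|F_{n+1}| ≤ |c| + ‖a‖₁ P̲(r₀) + ‖b + P(0) a‖₁ = r₀` there. Off the segment,
`|F_n ∘ Ψ| ≤ r₀ + ω_n s₁ n^{-1/k}` bounds `|g|` by `ω_{n+1}` on `[-1,1]_{k,s₁,n+1}`, and the mean
value inequality from the nearest point of `[-1,1]` gives the distance bound. Finally
`s₁ n^{-1/k} ω_n ≤ 1` as long as `ω_n ≤ C`, so the growth condition on `C` keeps `ω_{n+1} ≤ C`.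
-/

section Polynomial

variable (co : ℕ → ℝ) (N : ℕ)

lemma PfunC_ofReal (x : ℝ) : PfunC co N x = Pfun co N x := by
  simp [PfunC, Pfun]

lemma PfunC_differentiable : Differentiable ℂ (PfunC co N) := by
  unfold PfunC; fun_prop

lemma Pbar_nonneg {x : ℝ} (hx : 0 ≤ x) : 0 ≤ Pbar co N x :=
  Finset.sum_nonneg fun j _ => mul_nonneg (abs_nonneg _) (pow_nonneg hx j)

lemma Pbar_mono {x y : ℝ} (hx : 0 ≤ x) (hxy : x ≤ y) : Pbar co N x ≤ Pbar co N y :=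
  Finset.sum_le_sum fun j _ => mul_le_mul_of_nonneg_left (pow_le_pow_left₀ hx hxy j) (abs_nonneg _)

lemma norm_PfunC_sub_PfunC_zero_le (w : ℂ) :
    ‖PfunC co N w - PfunC co N 0‖ ≤ Pbar co N ‖w‖ := by
  have hsplit : ∀ v : ℂ, PfunC co N v = co 0 + ∑ j ∈ Finset.Icc 1 N, (co j : ℂ) * v ^ j := by
    intro v
    rw [PfunC, Finset.range_eq_Ico, Finset.sum_eq_sum_Ico_succ_bot N.succ_pos]
    simp [Finset.Ico_add_one_right_eq_Icc]
  have hzero : ∑ j ∈ Finset.Icc 1 N, (co j : ℂ) * (0:ℂ) ^ j = 0 :=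
    Finset.sum_eq_zero fun j hj => by simp [Nat.one_le_iff_ne_zero.1 (Finset.mem_Icc.1 hj).1]
  rw [hsplit w, hsplit 0, hzero, add_zero, add_sub_cancel_left]
  refine (norm_sum_le _ _).trans (le_of_eq ?_)
  simp [Pbar]

lemma norm_mul_PfunC_add_le {α β w : ℂ} {Ma Mb R : ℝ} (hα : ‖α‖ ≤ Ma)
    (hβ : ‖β + PfunC co N 0 * α‖ ≤ Mb) (hw : ‖w‖ ≤ R) :
    ‖α * PfunC co N w + β‖ ≤ Ma * Pbar co N R + Mb := calc
  ‖α * PfunC co N w + β‖ = ‖α * (PfunC co N w - PfunC co N 0) + (β + PfunC co N 0 * α)‖ := by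
      ring_nf
  _ ≤ ‖α‖ * Pbar co N ‖w‖ + Mb := by grw [norm_add_le, norm_mul, norm_PfunC_sub_PfunC_zero_le, hβ]
  _ ≤ Ma * Pbar co N R + Mb := add_le_add_left (mul_le_mul hα (Pbar_mono co N (norm_nonneg w) hw)
      (Pbar_nonneg co N (norm_nonneg w)) ((norm_nonneg α).trans hα)) _

end Polynomial

lemma seg_nonempty : seg.Nonempty := ⟨0, 0, by norm_num, by simp⟩

lemma isCompact_seg : IsCompact seg := isCompact_Icc.image Complex.continuous_ofReal

lemma convex_seg : Convex ℝ seg := by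
  simpa [seg] using (convex_Icc (-1:ℝ) 1).linear_image Complex.ofRealAm.toLinearMap

section Nbhd

variable {k A : ℝ} {n : ℕ}

lemma nbhd_eq_thickening : nbhd k A n = Metric.thickening (A * (n:ℝ) ^ (-1/k)) seg := by
  ext z
  rw [Metric.mem_thickening_iff_infDist_lt seg_nonempty]
  rfl

lemma isOpen_nbhd : IsOpen (nbhd k A n) := by
  rw [nbhd_eq_thickening]; exact Metric.isOpen_thickening

lemma convex_nbhd : Convex ℝ (nbhd k A n) := by
  rw [nbhd_eq_thickening]; exact convex_seg.thickening _

lemma nbhd_mono {A' : ℝ} (h : A ≤ A') : nbhd k A n ⊆ nbhd k A' n := fun _ hz =>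
  hz.trans_le (mul_le_mul_of_nonneg_right h (Real.rpow_nonneg n.cast_nonneg _))

lemma rpow_neg_inv_le_one (hk : 0 < k) (hn : 1 ≤ n) : (n:ℝ) ^ (-1/k) ≤ 1 :=
  Real.rpow_le_one_of_one_le_of_nonpos (by exact_mod_cast hn)
    (div_nonpos_of_nonpos_of_nonneg (by norm_num) hk.le)

lemma seg_subset_nbhd (hA : 0 < A) (hn : 1 ≤ n) : seg ⊆ nbhd k A n := fun z hz => by
  have : 0 < (n:ℝ) ^ (-1/k) := Real.rpow_pos_of_pos (by exact_mod_cast hn) _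
  simpa [nbhd, Metric.infDist_zero_of_mem hz] using mul_pos hA this

lemma nbhd_subset_thickening (hk : 0 < k) (hn : 1 ≤ n) (hA : 0 ≤ A) :
    nbhd k A n ⊆ Metric.thickening A seg := by
  rw [nbhd_eq_thickening]
  exact Metric.thickening_mono (mul_le_of_le_one_right hA (rpow_neg_inv_le_one hk hn)) _

/-- `Ψ z` lies in every `nbhd k A n`, and their radii tend to `0`. -/
lemma mapsTo_seg_of_image_nbhd_subset {Ψ : ℂ → ℂ} (hk : 0 < k) (hA : 0 < A)
    (hΨ : ∀ n : ℕ, 1 ≤ n → Ψ '' nbhd k A (n+1) ⊆ nbhd k A n) : MapsTo Ψ seg seg := by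
  intro z hz
  have hlim : Filter.Tendsto (fun n : ℕ => A * (n:ℝ) ^ (-1/k)) Filter.atTop (nhds 0) := by
    simpa [neg_div] using ((tendsto_rpow_neg_atTop (by positivity : 0 < 1/k)).comp
      tendsto_natCast_atTop_atTop).const_mul A
  have hle : Metric.infDist (Ψ z) seg ≤ 0 := by
    refine ge_of_tendsto hlim (Filter.eventually_atTop.2 ⟨1, fun n hn => ?_⟩)
    exact (hΨ n hn ⟨z, seg_subset_nbhd hA (by omega) hz, rfl⟩).le
  exact (isCompact_seg.isClosed.mem_iff_infDist_zero seg_nonempty).2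
    (hle.antisymm Metric.infDist_nonneg)

end Nbhd

section SegmentIntegral

open intervalIntegral

lemma segInt_ofReal (f : ℂ → ℂ) (d x : ℝ) : segInt f d x = ∫ t in d..x, f t := by
  have := smul_integral_comp_add_mul (a := 0) (b := 1) (fun t : ℝ => f t) (x - d) d
  simp only [mul_zero, add_zero, mul_one, add_sub_cancel, Complex.real_smul] at this
  rw [segInt, ← this]
  push_cast
  simp only [mul_comm]

variable {U : Set ℂ} {d z : ℂ}

lemma ContinuousOn.comp_segment {f : ℂ → ℂ} (hf : ContinuousOn f U) (hU : Convex ℝ U)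
    (hd : d ∈ U) (hz : z ∈ U) :
    ContinuousOn (fun t : ℝ => f (d + t * (z - d))) (Icc 0 1) :=
  hf.comp (by fun_prop) fun t ht => by
    simpa [Complex.real_smul] using hU.add_smul_sub_mem hd hz ht

lemma ContinuousOn.intervalIntegrable_comp_segment {f : ℂ → ℂ} (hf : ContinuousOn f U)
    (hU : Convex ℝ U) (hd : d ∈ U) (hz : z ∈ U) :
    IntervalIntegrable (fun t : ℝ => f (d + t * (z - d))) MeasureTheory.volume 0 1 :=
  (hf.comp_segment hU hd hz).intervalIntegrable_of_Icc zero_le_one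

lemma segInt_add {f h : ℂ → ℂ} (hf : ContinuousOn f U) (hh : ContinuousOn h U)
    (hU : Convex ℝ U) (hd : d ∈ U) (hz : z ∈ U) :
    segInt (fun ζ => f ζ + h ζ) d z = segInt f d z + segInt h d z := by
  simp only [segInt]
  rw [integral_add (hf.intervalIntegrable_comp_segment hU hd hz)
    (hh.intervalIntegrable_comp_segment hU hd hz), mul_add]

end SegmentIntegral

section Deriv
open intervalIntegral Metric
variable {U : Set ℂ} {d z : ℂ} {g : ℂ → ℂ}

lemma Convex.add_ofReal_mul_sub_mem (hU : Convex ℝ U) (hd : d ∈ U) (hz : z ∈ U) {t : ℝ}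
    (ht : t ∈ Icc (0:ℝ) 1) : d + t * (z - d) ∈ U := by
  simpa [Complex.real_smul] using hU.add_smul_sub_mem hd hz ht

lemma intervalIntegrable_deriv_comp_segment_mul (hU : IsOpen U) (hconv : Convex ℝ U)
    (hg : DifferentiableOn ℂ g U) (hd : d ∈ U) (hz : z ∈ U) :
    IntervalIntegrable (fun t : ℝ => deriv g (d + t * (z - d)) * t) MeasureTheory.volume 0 1 :=
  (((hg.analyticOnNhd hU).deriv.continuousOn.comp_segment hconv hd hz).mul
    Complex.continuous_ofReal.continuousOn).intervalIntegrable_of_Icc zero_le_one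

lemma hasDerivAt_integral_comp_segment (hU : IsOpen U) (hconv : Convex ℝ U)
    (hg : DifferentiableOn ℂ g U) (hd : d ∈ U) (hz : z ∈ U) :
    HasDerivAt (fun w => ∫ t in (0:ℝ)..1, g (d + t * (w - d)))
      (∫ t in (0:ℝ)..1, deriv g (d + t * (z - d)) * t) z := by
  have hg' : ContinuousOn (deriv g) U := (hg.analyticOnNhd hU).deriv.continuousOn
  obtain ⟨ε, hε, hεU⟩ := nhds_basis_closedBall.mem_iff.1 (hU.mem_nhds hz)
  obtain ⟨M, hM⟩ := (isCompact_Icc.prod (isCompact_closedBall z ε)).exists_bound_of_continuousOn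
    (f := fun p : ℝ × ℂ => deriv g (d + p.1 * (p.2 - d)))
    (hg'.comp (by fun_prop) fun p hp => hconv.add_ofReal_mul_sub_mem hd (hεU hp.2) hp.1)
  have hIoc : uIoc (0:ℝ) 1 ⊆ Icc 0 1 := by rw [uIoc_of_le zero_le_one]; exact Ioc_subset_Icc_self
  refine (hasDerivAt_integral_of_dominated_loc_of_deriv_le (F := fun w t => g (d + t * (w - d)))
    (F' := fun w t => deriv g (d + t * (w - d)) * t) (bound := fun _ => M)
    (ball_mem_nhds z hε) ?_ ?_ ?_ ?_ intervalIntegrable_const ?_).2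
  · filter_upwards [ball_mem_nhds z hε] with w hw
    exact ((hg.continuousOn.comp_segment hconv hd (hεU (ball_subset_closedBall hw))).mono
      hIoc).aestronglyMeasurable measurableSet_uIoc
  · exact hg.continuousOn.intervalIntegrable_comp_segment hconv hd hz
  · simpa only [uIoc_of_le zero_le_one] using
      (intervalIntegrable_deriv_comp_segment_mul hU hconv hg hd hz).aestronglyMeasurable
  · refine MeasureTheory.ae_of_all _ fun t ht w hw => ?_
    rw [norm_mul, Complex.norm_real, Real.norm_of_nonneg (hIoc ht).1]
    exact (mul_le_of_le_one_right (norm_nonneg _) (hIoc ht).2).trans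
      (hM (t, w) ⟨hIoc ht, ball_subset_closedBall hw⟩)
  · refine MeasureTheory.ae_of_all _ fun t ht w hw => ?_
    have hw' := hconv.add_ofReal_mul_sub_mem hd (hεU (ball_subset_closedBall hw)) (hIoc ht)
    exact ((hg.differentiableAt (hU.mem_nhds hw')).hasDerivAt.comp w
      ((((hasDerivAt_id w).sub_const d).const_mul (t:ℂ)).const_add d)).congr_deriv (by ring)

/-- The integrand is the derivative of `t ↦ t g(d + t (z - d))`. -/
lemma integral_comp_segment_add_deriv (hU : IsOpen U) (hconv : Convex ℝ U)
    (hg : DifferentiableOn ℂ g U) (hd : d ∈ U) (hz : z ∈ U) :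
    ∫ t in (0:ℝ)..1, (g (d + t * (z - d)) + (z - d) * (deriv g (d + t * (z - d)) * t)) = g z := by
  have hprim : ∀ t ∈ uIcc (0:ℝ) 1, HasDerivAt (fun s : ℝ => (s:ℂ) * g (d + s * (z - d)))
      (g (d + t * (z - d)) + (z - d) * (deriv g (d + t * (z - d)) * t)) t := by
    intro t ht
    rw [uIcc_of_le zero_le_one] at ht
    have hpath : HasDerivAt (fun s : ℝ => d + s * (z - d)) (z - d) t := by
      simpa using ((hasDerivAt_id t).ofReal_comp.mul_const (z - d)).const_add d
    have hgt :=
      (hg.differentiableAt (hU.mem_nhds (hconv.add_ofReal_mul_sub_mem hd hz ht))).hasDerivAt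
    refine ((hasDerivAt_id t).ofReal_comp.mul (hgt.comp t hpath)).congr_deriv ?_
    simp only [id, Complex.ofReal_one, Function.comp_apply]
    ring
  rw [integral_eq_sub_of_hasDerivAt hprim ((hg.continuousOn.intervalIntegrable_comp_segment
    hconv hd hz).add ((intervalIntegrable_deriv_comp_segment_mul hU hconv hg hd hz).const_mul _))]
  simp

theorem hasDerivAt_segInt (hU : IsOpen U) (hconv : Convex ℝ U) (hg : DifferentiableOn ℂ g U)
    (hd : d ∈ U) (hz : z ∈ U) : HasDerivAt (segInt g d) (g z) z := by
  refine (((hasDerivAt_id z).sub_const d).mul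
    (hasDerivAt_integral_comp_segment hU hconv hg hd hz)).congr_deriv ?_
  rw [← integral_comp_segment_add_deriv hU hconv hg hd hz, intervalIntegral.integral_add
    (hg.continuousOn.intervalIntegrable_comp_segment hconv hd hz)
    ((intervalIntegrable_deriv_comp_segment_mul hU hconv hg hd hz).const_mul _),
    integral_const_mul, one_mul, id]

end Deriv

section Bounds
open Metric

lemma norm_integral_le_integral_of_mem_Icc {E : Type*} [NormedAddCommGroup E] [NormedSpace ℝ E]
    {f : ℝ → E} {m : ℝ → ℝ} {a b d x : ℝ} (hd : d ∈ Icc a b) (hx : x ∈ Icc a b)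
    (hm : IntervalIntegrable m MeasureTheory.volume a b) (hfm : ∀ t ∈ Icc a b, ‖f t‖ ≤ m t) :
    ‖∫ t in d..x, f t‖ ≤ ∫ t in a..b, m t := by
  have hsub : uIcc d x ⊆ uIcc a b := uIcc_subset_uIcc (Icc_subset_uIcc hd) (Icc_subset_uIcc hx)
  have hab : a ≤ b := hd.1.trans hd.2
  have hm0 : ∀ t ∈ Icc a b, 0 ≤ m t := fun t ht => (norm_nonneg _).trans (hfm t ht)
  have hIoc : uIoc a b ⊆ Icc a b := by rw [uIoc_of_le hab]; exact Ioc_subset_Icc_self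
  calc ‖∫ t in d..x, f t‖ ≤ |∫ t in d..x, m t| :=
        intervalIntegral.norm_integral_le_abs_of_norm_le
          ((MeasureTheory.ae_restrict_mem measurableSet_uIoc).mono fun t ht =>
            hfm t (hIoc (uIoc_subset_uIoc_of_uIcc_subset_uIcc hsub ht)))
          (hm.mono_set hsub)
    _ ≤ |∫ t in a..b, m t| := intervalIntegral.abs_integral_mono_interval
        (uIoc_subset_uIoc_of_uIcc_subset_uIcc hsub)
        ((MeasureTheory.ae_restrict_mem measurableSet_uIoc).mono fun t ht => hm0 t (hIoc ht)) hm
    _ = ∫ t in a..b, m t := abs_of_nonneg (intervalIntegral.integral_nonneg hab hm0)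

lemma norm_le_add_infDist {E : Type*} [SeminormedAddCommGroup E] {S : Set E} (hS : S.Nonempty)
    {r : ℝ} (hr : ∀ y ∈ S, ‖y‖ ≤ r) (w : E) : ‖w‖ ≤ r + infDist w S := by
  rw [← sub_le_iff_le_add']
  refine (le_infDist hS).2 fun y hy => ?_
  rw [dist_eq_norm]
  linarith [norm_le_norm_add_norm_sub' w y, hr y hy]

/-- Mean value inequality along the segment from `z` to a point of `K` at distance `< δ`. -/
lemma infDist_le_of_norm_deriv_le {𝕜 G : Type*} [RCLike 𝕜] [NormedAddCommGroup G]
    [NormedSpace 𝕜 G] {f : 𝕜 → G} {K : Set 𝕜} {S : Set G} {δ M : ℝ} (hK : Convex ℝ K)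
    (hf : ∀ z ∈ thickening δ K, DifferentiableAt 𝕜 f z)
    (hf' : ∀ z ∈ thickening δ K, ‖deriv f z‖ ≤ M) (hKS : MapsTo f K S) {z : 𝕜}
    (hz : z ∈ thickening δ K) : infDist (f z) S ≤ M * δ := by
  obtain ⟨p, hp, hzp⟩ := mem_thickening_iff.1 hz
  have hp' : p ∈ thickening δ K := self_subset_thickening (dist_nonneg.trans_lt hzp) K hp
  have hM : 0 ≤ M := (norm_nonneg _).trans (hf' z hz)
  calc infDist (f z) S ≤ ‖f z - f p‖ := by
        rw [← dist_eq_norm]; exact infDist_le_dist_of_mem (hKS hp)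
    _ ≤ M * ‖z - p‖ := (hK.thickening δ).norm_image_sub_le_of_norm_deriv_le hf hf' hp' hz
    _ ≤ M * δ := by rw [← dist_eq_norm]; gcongr

lemma norm_le_sSup_image_thickening {α F : Type*} [PseudoMetricSpace α] [ProperSpace α]
    [SeminormedAddCommGroup F] {K : Set α} (hK : IsCompact K) {f : α → F} {δ ε : ℝ}
    (hδε : δ < ε) (hf : ContinuousOn f (thickening ε K)) {z : α} (hz : z ∈ thickening δ K) :
    ‖f z‖ ≤ sSup ((fun z => ‖f z‖) '' thickening δ K) := by
  obtain ⟨p, -, hzp⟩ := mem_thickening_iff.1 hz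
  have hsub : cthickening δ K ⊆ thickening ε K :=
    cthickening_subset_thickening' (dist_nonneg.trans_lt (hzp.trans hδε)) hδε K
  obtain ⟨C, hC⟩ := hK.cthickening.exists_bound_of_continuousOn (hf.mono hsub)
  refine le_csSup ⟨C, ?_⟩ (mem_image_of_mem _ hz)
  rintro _ ⟨w, hw, rfl⟩
  simpa using hC w (thickening_subset_cthickening δ K hw)

end Bounds

section Iteration
open Metric

variable (co : ℕ → ℝ) (N : ℕ)

lemma continuousOn_Icc_of_ofReal_eq {A : ℂ → ℂ} {a : ℝ → ℝ} (hA : ContinuousOn A seg)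
    (hAa : ∀ t ∈ Icc (-1:ℝ) 1, A t = a t) : ContinuousOn a (Icc (-1) 1) :=
  (Complex.continuous_re.comp_continuousOn (hA.comp Complex.continuous_ofReal.continuousOn
    fun t ht => ⟨t, ht, rfl⟩)).congr fun t ht => by simp [hAa t ht]

/-- On `[-1,1]` the integrand is real and bounded by `|a| P̲(r) + |b + P(0) a|`, so the new iterate
stays in `[-r, r]` by the fixed-point equation of `r`. -/
lemma mapsTo_add_segInt {A B H : ℂ → ℂ} {a b : ℝ → ℝ} {c d r : ℝ} (hd : d ∈ Icc (-1:ℝ) 1)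
    (hAa : ∀ t ∈ Icc (-1:ℝ) 1, A t = a t) (hBb : ∀ t ∈ Icc (-1:ℝ) 1, B t = b t)
    (hA : ContinuousOn A seg) (hB : ContinuousOn B seg)
    (hH : MapsTo H seg (Complex.ofReal '' Icc (-r) r))
    (hr : r = norm1 a * Pbar co N r + norm1 (fun t => b t + Pfun co N 0 * a t) + |c|) :
    MapsTo (fun z => c + segInt (fun ζ => A ζ * PfunC co N (H ζ) + B ζ) d z) seg
      (Complex.ofReal '' Icc (-r) r) := by
  rintro _ ⟨x, hx, rfl⟩
  have ha := continuousOn_Icc_of_ofReal_eq hA hAa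
  have hb := continuousOn_Icc_of_ofReal_eq hB hBb
  set g : ℂ → ℂ := fun ζ => A ζ * PfunC co N (H ζ) + B ζ
  set m : ℝ → ℝ := fun t => |a t| * Pbar co N r + |b t + Pfun co N 0 * a t|
  have hg : ∀ t ∈ Icc (-1:ℝ) 1, g t = ((g t).re : ℂ) ∧ ‖g t‖ ≤ m t := by
    intro t ht
    obtain ⟨w, hw, hHw⟩ := hH ⟨t, ht, rfl⟩
    have hgt : g t = ((a t * Pfun co N w + b t : ℝ) : ℂ) := by
      simp only [g, hAa t ht, hBb t ht, ← hHw, PfunC_ofReal]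
      push_cast; ring
    refine ⟨by rw [hgt, Complex.ofReal_re], norm_mul_PfunC_add_le co N ?_ ?_ ?_⟩
    · rw [hAa t ht, Complex.norm_real, Real.norm_eq_abs]
    · rw [hAa t ht, hBb t ht, ← Complex.ofReal_zero, PfunC_ofReal, ← Complex.ofReal_mul,
        ← Complex.ofReal_add, Complex.norm_real, Real.norm_eq_abs]
    · rw [← hHw, Complex.norm_real, Real.norm_eq_abs]; exact abs_le.2 hw
  have hsub : uIcc d x ⊆ Icc (-1) 1 := uIcc_subset_Icc hd hx
  have hreal : ∫ t in d..x, g t = ((∫ t in d..x, (g t).re : ℝ) : ℂ) := by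
    rw [← intervalIntegral.integral_ofReal]
    exact intervalIntegral.integral_congr fun t ht => (hg t (hsub ht)).1
  have ha' : IntervalIntegrable (fun t => |a t| * Pbar co N r) MeasureTheory.volume (-1) 1 :=
    (ha.abs.mul continuousOn_const).intervalIntegrable_of_Icc (by norm_num)
  have hb' : IntervalIntegrable (fun t => |b t + Pfun co N 0 * a t|) MeasureTheory.volume (-1) 1 :=
    (hb.add (continuousOn_const.mul ha)).abs.intervalIntegrable_of_Icc (by norm_num)
  have hm : ∫ t in (-1:ℝ)..1, m t =
      norm1 a * Pbar co N r + norm1 (fun t => b t + Pfun co N 0 * a t) := by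
    rw [intervalIntegral.integral_add ha' hb', intervalIntegral.integral_mul_const, norm1, norm1]
  refine ⟨c + ∫ t in d..x, (g t).re, abs_le.1 ?_, by
    simp only [segInt_ofReal, hreal, Complex.ofReal_add]⟩
  have hI := norm_integral_le_integral_of_mem_Icc (f := fun t : ℝ => (g t).re) hd hx (ha'.add hb')
    fun t ht => (Complex.abs_re_le_norm _).trans (hg t ht).2
  rw [Real.norm_eq_abs] at hI
  calc |c + ∫ t in d..x, (g t).re| ≤ |c| + ∫ t in (-1:ℝ)..1, m t :=
        (abs_add_le _ _).trans (add_le_add_right hI _)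
    _ = r := by rw [hm]; linarith

lemma iterate_coeff_mem_Icc {Ma Mb r C s ε w : ℝ} (hMa : 0 ≤ Ma) (hMb : 0 ≤ Mb) (hr : 0 ≤ r)
    (hs : 0 ≤ s) (hsC : s ≤ 1 / C) (hε : ε ∈ Icc 0 1) (hw : w ∈ Icc 0 C)
    (hCQ : ∀ x, 0 ≤ x → Ma * Pbar co N (r + x) + Mb ≤ C * max x 1 ^ N) :
    Ma * Pbar co N (r + s * ε * w) + Mb ∈ Icc 0 C := by
  have hC : 0 ≤ 1 / C := hs.trans hsC
  have hx0 : 0 ≤ s * ε * w := mul_nonneg (mul_nonneg hs hε.1) hw.1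
  have hx1 : s * ε * w ≤ 1 := calc
    s * ε * w ≤ 1 / C * 1 * C :=
      mul_le_mul (mul_le_mul hsC hε.2 hε.1 hC) hw.2 hw.1 (by rwa [mul_one])
    _ ≤ 1 := by rw [mul_one, one_div_mul_eq_div]; exact div_self_le_one C
  exact ⟨add_nonneg (mul_nonneg hMa (Pbar_nonneg co N (add_nonneg hr hx0))) hMb,
    by simpa [max_eq_right hx1] using hCQ _ hx0⟩

lemma iterate_step {U : Set ℂ} (hU : IsOpen U) (hUc : Convex ℝ U) (hsegU : seg ⊆ U) {δ : ℝ}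
    (hδU : thickening δ seg ⊆ U) {A B H F : ℂ → ℂ} {a b : ℝ → ℝ} {c d r Ma Mb ρ : ℝ}
    (hd : d ∈ Icc (-1:ℝ) 1) (hA : DifferentiableOn ℂ A U) (hB : DifferentiableOn ℂ B U)
    (hH : DifferentiableOn ℂ H U)
    (hAa : ∀ t ∈ Icc (-1:ℝ) 1, A t = a t) (hBb : ∀ t ∈ Icc (-1:ℝ) 1, B t = b t)
    (hHseg : MapsTo H seg (Complex.ofReal '' Icc (-r) r))
    (hr : r = norm1 a * Pbar co N r + norm1 (fun t => b t + Pfun co N 0 * a t) + |c|)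
    (hMa : ∀ z ∈ thickening δ seg, ‖A z‖ ≤ Ma)
    (hMb : ∀ z ∈ thickening δ seg, ‖B z + PfunC co N 0 * A z‖ ≤ Mb)
    (hHρ : ∀ z ∈ thickening δ seg, infDist (H z) (Complex.ofReal '' Icc (-r) r) ≤ ρ)
    (hF : ∀ z ∈ U, F z = c + segInt (fun ζ => A ζ * PfunC co N (H ζ)) d z + segInt B d z) :
    DifferentiableOn ℂ F U ∧ MapsTo F seg (Complex.ofReal '' Icc (-r) r) ∧
      ∀ z ∈ thickening δ seg,
        infDist (F z) (Complex.ofReal '' Icc (-r) r) ≤ (Ma * Pbar co N (r + ρ) + Mb) * δ := by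
  set g : ℂ → ℂ := fun ζ => A ζ * PfunC co N (H ζ) + B ζ
  have hdU : (d:ℂ) ∈ U := hsegU ⟨d, hd, rfl⟩
  have hAP : DifferentiableOn ℂ (fun ζ => A ζ * PfunC co N (H ζ)) U :=
    hA.mul ((PfunC_differentiable co N).comp_differentiableOn hH)
  have hFg : EqOn F (fun z => c + segInt g d z) U := fun z hz => by
    rw [hF z hz, add_assoc, ← segInt_add hAP.continuousOn hB.continuousOn hUc hdU hz]
  have hderiv : ∀ z ∈ U, HasDerivAt F (g z) z := fun z hz =>
    ((hasDerivAt_segInt hU hUc (hAP.add hB) hdU hz).const_add _).congr_of_eventuallyEq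
      (Filter.eventuallyEq_of_mem (hU.mem_nhds hz) hFg)
  have hSne : (Complex.ofReal '' Icc (-r) r).Nonempty :=
    (seg_nonempty.image H).mono hHseg.image_subset
  have hS : ∀ y ∈ Complex.ofReal '' Icc (-r) r, ‖y‖ ≤ r := by
    rintro _ ⟨y, hy, rfl⟩; simpa [abs_le] using hy
  have hseg : MapsTo F seg (Complex.ofReal '' Icc (-r) r) :=
    (mapsTo_add_segInt co N hd hAa hBb (hA.continuousOn.mono hsegU) (hB.continuousOn.mono hsegU)
      hHseg hr).congr (hFg.mono hsegU).symm
  refine ⟨fun z hz => (hderiv z hz).differentiableAt.differentiableWithinAt, hseg,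
    fun z hz => infDist_le_of_norm_deriv_le convex_seg
      (fun w hw => (hderiv w (hδU hw)).differentiableAt)
      (fun w hw => ?_) hseg hz⟩
  rw [(hderiv w (hδU hw)).deriv]
  exact norm_mul_PfunC_add_le co N (hMa w hw) (hMb w hw)
    ((norm_le_add_infDist hSne hS _).trans (add_le_add_right (hHρ w hw) _))

end Iteration

open Metric in
theorem iterate_invariant (co : ℕ → ℝ) (N : ℕ) {k μ ν s₁ c d r₀ Ma Mb C : ℝ}
    {A B Ψ : ℂ → ℂ} {a b : ℝ → ℝ} {F : ℕ → ℂ → ℂ} {ω : ℕ → ℝ}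
    (hk : 0 < k) (hν : 0 < ν) (hνμ : ν < μ) (hs₁ : 0 < s₁) (hs₁ν : s₁ < ν / 2)
    (hs₁C : s₁ ≤ 1 / C) (hC : 1 ≤ C)
    (hA : DifferentiableOn ℂ A (thickening μ seg)) (hB : DifferentiableOn ℂ B (thickening μ seg))
    (hΨ : DifferentiableOn ℂ Ψ (thickening μ seg))
    (hAa : ∀ t ∈ Icc (-1:ℝ) 1, A t = a t) (hBb : ∀ t ∈ Icc (-1:ℝ) 1, B t = b t)
    (hΨν : ∀ n : ℕ, 1 ≤ n → Ψ '' nbhd k ν (n+1) ⊆ nbhd k ν n)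
    (hΨs₁ : ∀ n : ℕ, 1 ≤ n → Ψ '' nbhd k s₁ (n+1) ⊆ nbhd k s₁ n)
    (hd : d ∈ Icc (-1:ℝ) 1) (hr₀ : 0 ≤ r₀)
    (hr₀eq : r₀ = norm1 a * Pbar co N r₀ + norm1 (fun t => b t + Pfun co N 0 * a t) + |c|)
    (hMa : ∀ z ∈ thickening (μ/2) seg, ‖A z‖ ≤ Ma)
    (hMb : ∀ z ∈ thickening (μ/2) seg, ‖B z + PfunC co N 0 * A z‖ ≤ Mb)
    (hMa0 : 0 ≤ Ma) (hMb0 : 0 ≤ Mb)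
    (hF1 : ∀ z ∈ nbhd k ν 1, F 1 z = 0)
    (hFrec : ∀ n : ℕ, 1 ≤ n → ∀ z ∈ nbhd k ν (n+1),
      F (n+1) z = c + segInt (fun ζ => A ζ * PfunC co N (F n (Ψ ζ))) d z + segInt B d z)
    (hω1 : ω 1 = 1)
    (hωrec : ∀ n : ℕ, 1 ≤ n →
      ω (n+1) = Ma * Pbar co N (r₀ + s₁ * (n:ℝ) ^ (-(1:ℝ)/k) * ω n) + Mb)
    (hCQ : ∀ x : ℝ, 0 ≤ x → Ma * Pbar co N (r₀ + x) + Mb ≤ C * (max x 1) ^ N)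
    {n : ℕ} (hn : 1 ≤ n) :
    DifferentiableOn ℂ (F n) (nbhd k ν n) ∧ MapsTo (F n) seg (Complex.ofReal '' Icc (-r₀) r₀) ∧
      (∀ z ∈ nbhd k s₁ n,
        infDist (F n z) (Complex.ofReal '' Icc (-r₀) r₀) ≤ ω n * (s₁ * (n:ℝ) ^ (-(1:ℝ)/k))) ∧
      ω n ∈ Icc 0 C := by
  induction n, hn using Nat.le_induction with
  | base =>
    have h0 : (0:ℂ) ∈ Complex.ofReal '' Icc (-r₀) r₀ := ⟨0, ⟨by linarith, hr₀⟩, by simp⟩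
    refine ⟨(differentiableOn_const 0).congr hF1, fun z hz => ?_, fun z hz => ?_,
      by rw [hω1]; exact ⟨zero_le_one, hC⟩⟩
    · rw [hF1 z (seg_subset_nbhd hν le_rfl hz)]; exact h0
    · rw [hF1 z (nbhd_mono (by linarith) hz), infDist_zero_of_mem h0, hω1]; positivity
  | succ n hn ih =>
    obtain ⟨hdiff, hseg, hbound, hω⟩ := ih
    have hUμ : nbhd k ν (n+1) ⊆ thickening μ seg :=
      (nbhd_subset_thickening hk (by omega) hν.le).trans (thickening_mono hνμ.le _)
    have hVμ : nbhd k s₁ (n+1) ⊆ thickening (μ/2) seg :=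
      (nbhd_subset_thickening hk (by omega) hs₁.le).trans (thickening_mono (by linarith) _)
    have hVU : nbhd k s₁ (n+1) ⊆ nbhd k ν (n+1) := nbhd_mono (by linarith)
    rw [nbhd_eq_thickening] at hVμ hVU
    obtain ⟨h1, h2, h3⟩ := iterate_step co N isOpen_nbhd convex_nbhd
      (seg_subset_nbhd hν (by omega)) hVU hd (hA.mono hUμ) (hB.mono hUμ)
      (hdiff.comp (hΨ.mono hUμ) fun z hz => hΨν n hn ⟨z, hz, rfl⟩) hAa hBb
      (hseg.comp (mapsTo_seg_of_image_nbhd_subset hk hs₁ hΨs₁)) hr₀eq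
      (fun z hz => hMa z (hVμ hz)) (fun z hz => hMb z (hVμ hz))
      (ρ := s₁ * (n:ℝ) ^ (-(1:ℝ)/k) * ω n) (fun z hz => by
        rw [mul_comm]; exact hbound _ (hΨs₁ n hn ⟨z, by rwa [nbhd_eq_thickening], rfl⟩))
      (hFrec n hn)
    rw [hωrec n hn]
    exact ⟨h1, h2, fun z hz => h3 z (by rwa [nbhd_eq_thickening] at hz),
      iterate_coeff_mem_Icc co N hMa0 hMb0 hr₀ hs₁.le hs₁C
        ⟨by positivity, rpow_neg_inv_le_one hk hn⟩ hω hCQ⟩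

theorem stmt9_general (k : ℝ) (hk : 0 < k) (μ : ℝ) (hμ : 0 < μ) (A B Ψ : ℂ → ℂ)
    (hA : DifferentiableOn ℂ A (Metric.thickening μ seg))
    (hB : DifferentiableOn ℂ B (Metric.thickening μ seg))
    (hΨ : DifferentiableOn ℂ Ψ (Metric.thickening μ seg))
    (hAreal : ∀ t ∈ Icc (-1:ℝ) 1, (A t).im = 0)
    (hBreal : ∀ t ∈ Icc (-1:ℝ) 1, (B t).im = 0)
    (τψ : ℝ)
    (a b : ℝ → ℝ)
    (haA : ∀ t : ℝ, a t = (A t).re) (hbB : ∀ t : ℝ, b t = (B t).re)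
    (N₀ : ℕ) (co : ℕ → ℝ)
    (d : ℝ) (hd : d ∈ Icc (-1:ℝ) 1) (c : ℝ)
    (r₀ : ℝ)
    (hr₀ : IsLeast {r : ℝ | 0 ≤ r ∧
      r = norm1 a * Pbar co N₀ r + norm1 (fun t => b t + Pfun co N₀ 0 * a t) + |c|} r₀)
    (ν : ℝ) (hν0 : 0 < ν) (hνlt : ν < min μ τψ)
    (hνΨ : ∀ n : ℕ, 1 ≤ n → Ψ '' nbhd k ν (n+1) ⊆ nbhd k ν n)
    (F : ℕ → ℂ → ℂ)
    (hF1 : ∀ z ∈ nbhd k ν 1, F 1 z = 0)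
    (hFrec : ∀ n : ℕ, 1 ≤ n → ∀ z ∈ nbhd k ν (n+1),
      F (n+1) z = (c:ℂ) + segInt (fun ζ => A ζ * PfunC co N₀ (F n (Ψ ζ))) (d:ℂ) z
        + segInt B (d:ℂ) z)
    (Ma Mb : ℝ)
    (hMa : Ma = sSup ((fun z => ‖A z‖) '' Metric.thickening (μ/2) seg))
    (hMb : Mb = sSup ((fun z => ‖B z + PfunC co N₀ 0 * A z‖)
      '' Metric.thickening (μ/2) seg))
    (ω : ℕ → ℝ) (hω1 : ω 1 = 1)
    (s₁ : ℝ)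
    (hωrec : ∀ n : ℕ, 1 ≤ n →
      ω (n+1) = Ma * Pbar co N₀ (r₀ + s₁ * (n:ℝ) ^ (-(1:ℝ)/k) * ω n) + Mb)
    (C : ℝ) (hC : max (2/ν) 1 < C)
    (hCQ : ∀ x : ℝ, 0 ≤ x →
      Ma * Pbar co N₀ (r₀ + x) + Mb ≤ C * (max x 1) ^ N₀)
    (hs₁0 : 0 < s₁) (hs₁C : s₁ ≤ 1 / C)
    (hs₁Ψ : ∀ n : ℕ, 1 ≤ n → Ψ '' nbhd k s₁ (n+1) ⊆ nbhd k s₁ n) :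
    ∀ n : ℕ, 1 ≤ n →
      DifferentiableOn ℂ (F n) (nbhd k ν n) ∧
      (∀ z ∈ nbhd k s₁ n,
        Metric.infDist (F n z) (Complex.ofReal '' Icc (-r₀) r₀)
          ≤ ω n * (s₁ * (n:ℝ) ^ (-(1:ℝ)/k))) ∧
      (∀ z ∈ nbhd k s₁ n,
        Metric.infDist (F n z) (Complex.ofReal '' Icc (-r₀) r₀)
          ≤ C * (s₁ * (n:ℝ) ^ (-(1:ℝ)/k))) := by
  have hC1 : 1 < C := (le_max_right _ _).trans_lt hC
  have hs₁ν : s₁ < ν / 2 := hs₁C.trans_lt <| by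
    have := (div_lt_iff₀ hν0).1 ((le_max_left _ _).trans_lt hC)
    rw [div_lt_div_iff₀ (by linarith) two_pos]; linarith
  have hAa : ∀ t ∈ Icc (-1:ℝ) 1, A t = a t := fun t ht =>
    Complex.ext (by simp [haA]) (by simp [hAreal t ht])
  have hBb : ∀ t ∈ Icc (-1:ℝ) 1, B t = b t := fun t ht =>
    Complex.ext (by simp [hbB]) (by simp [hBreal t ht])
  have hMa' : ∀ z ∈ Metric.thickening (μ/2) seg, ‖A z‖ ≤ Ma := fun z hz =>
    hMa ▸ norm_le_sSup_image_thickening isCompact_seg (half_lt_self hμ) hA.continuousOn hz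
  have hMb' : ∀ z ∈ Metric.thickening (μ/2) seg, ‖B z + PfunC co N₀ 0 * A z‖ ≤ Mb := fun z hz =>
    hMb ▸ norm_le_sSup_image_thickening isCompact_seg (half_lt_self hμ)
      (hB.continuousOn.add (continuousOn_const.mul hA.continuousOn)) hz
  have hMa0 : 0 ≤ Ma := hMa ▸ Real.sSup_nonneg (by rintro _ ⟨z, -, rfl⟩; exact norm_nonneg _)
  have hMb0 : 0 ≤ Mb := hMb ▸ Real.sSup_nonneg (by rintro _ ⟨z, -, rfl⟩; exact norm_nonneg _)
  intro n hn
  obtain ⟨hdiff, -, hbound, hω⟩ := iterate_invariant co N₀ hk hν0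
    (hνlt.trans_le (min_le_left _ _)) hs₁0 hs₁ν hs₁C hC1.le hA hB hΨ hAa hBb hνΨ hs₁Ψ hd
    hr₀.1.1 hr₀.1.2 hMa' hMb' hMa0 hMb0 hF1 hFrec hω1 hωrec hCQ hn
  exact ⟨hdiff, hbound, fun z hz => (hbound z hz).trans (by gcongr; exact hω.2)⟩

/-- Proposition 4.1 of the paper: each `F_n` is well defined and holomorphic on
`[-1,1]_{k,ν,n}`, and `F_n([-1,1]_{k,s₁,n})` is contained in the
`ω_{n,s₁} s₁ n^{-1/k}`-neighborhood (hence in the `C s₁ n^{-1/k}`-neighborhood) of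
`[-r₀,r₀]`. -/
theorem stmt9 (k : ℝ) (hk : 0 < k) (μ : ℝ) (hμ : 0 < μ) (A B Ψ : ℂ → ℂ)
    (hA : DifferentiableOn ℂ A (Metric.thickening μ seg))
    (hB : DifferentiableOn ℂ B (Metric.thickening μ seg))
    (hΨ : DifferentiableOn ℂ Ψ (Metric.thickening μ seg))
    (hAreal : ∀ t ∈ Icc (-1:ℝ) 1, (A t).im = 0)
    (hBreal : ∀ t ∈ Icc (-1:ℝ) 1, (B t).im = 0)
    (τψ : ℝ) (hτψ : 0 < τψ) (hτψμ : τψ ≤ μ)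
    (hΨE : ∀ A' ∈ Set.Ioc (0:ℝ) τψ, ∃ N : ℕ, 1 ≤ N ∧
      ∀ p : ℕ, N ≤ p → Ψ '' nbhd k A' (p+1) ⊆ nbhd k A' p)
    (a b ψ : ℝ → ℝ)
    (haA : ∀ t : ℝ, a t = (A t).re) (hbB : ∀ t : ℝ, b t = (B t).re)
    (hψΨ : ∀ t : ℝ, ψ t = (Ψ t).re)
    (N₀ : ℕ) (hN₀ : 2 ≤ N₀) (co : ℕ → ℝ) (hlead : co N₀ ≠ 0)
    (d : ℝ) (hd : d ∈ Icc (-1:ℝ) 1) (c : ℝ)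
    (ha1 : 0 < norm1 a)
    (hsmall : norm1 a * deriv (Pbar co N₀) 0 < 1)
    (θ : ℝ) (hθpos : 0 < θ) (hθ : norm1 a * deriv (Pbar co N₀) θ = 1)
    (hcond1 : 0 < norm1 (fun t => b t + Pfun co N₀ 0 * a t) + |c|)
    (hcond2 : norm1 (fun t => b t + Pfun co N₀ 0 * a t) + |c|
      < θ - Pbar co N₀ θ / deriv (Pbar co N₀) θ)
    (r₀ : ℝ)
    (hr₀ : IsLeast {r : ℝ | 0 ≤ r ∧
      r = norm1 a * Pbar co N₀ r + norm1 (fun t => b t + Pfun co N₀ 0 * a t) + |c|} r₀)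
    (ν : ℝ) (hν0 : 0 < ν) (hνlt : ν < min μ τψ)
    (hνΨ : ∀ n : ℕ, 1 ≤ n → Ψ '' nbhd k ν (n+1) ⊆ nbhd k ν n)
    (F : ℕ → ℂ → ℂ)
    (hF1 : ∀ z ∈ nbhd k ν 1, F 1 z = 0)
    (hFrec : ∀ n : ℕ, 1 ≤ n → ∀ z ∈ nbhd k ν (n+1),
      F (n+1) z = (c:ℂ) + segInt (fun ζ => A ζ * PfunC co N₀ (F n (Ψ ζ))) (d:ℂ) z
        + segInt B (d:ℂ) z)
    (Ma Mb : ℝ)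
    (hMa : Ma = sSup ((fun z => ‖A z‖) '' Metric.thickening (μ/2) seg))
    (hMb : Mb = sSup ((fun z => ‖B z + PfunC co N₀ 0 * A z‖)
      '' Metric.thickening (μ/2) seg))
    (ω : ℕ → ℝ) (hω1 : ω 1 = 1)
    (s₁ : ℝ)
    (hωrec : ∀ n : ℕ, 1 ≤ n →
      ω (n+1) = Ma * Pbar co N₀ (r₀ + s₁ * (n:ℝ) ^ (-(1:ℝ)/k) * ω n) + Mb)
    (C : ℝ) (hC : max (2/ν) 1 < C)
    (hCQ : ∀ x : ℝ, 0 ≤ x →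
      Ma * Pbar co N₀ (r₀ + x) + Mb ≤ C * (max x 1) ^ N₀)
    (hs₁0 : 0 < s₁) (hs₁C : s₁ ≤ 1 / C)
    (hs₁Ψ : ∀ n : ℕ, 1 ≤ n → Ψ '' nbhd k s₁ (n+1) ⊆ nbhd k s₁ n) :
    ∀ n : ℕ, 1 ≤ n →
      DifferentiableOn ℂ (F n) (nbhd k ν n) ∧
      (∀ z ∈ nbhd k s₁ n,
        Metric.infDist (F n z) (Complex.ofReal '' Icc (-r₀) r₀)
          ≤ ω n * (s₁ * (n:ℝ) ^ (-(1:ℝ)/k))) ∧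
      (∀ z ∈ nbhd k s₁ n,
        Metric.infDist (F n z) (Complex.ofReal '' Icc (-r₀) r₀)
          ≤ C * (s₁ * (n:ℝ) ^ (-(1:ℝ)/k))) :=
  stmt9_general k hk μ hμ A B Ψ hA hB hΨ hAreal hBreal τψ a b haA hbB N₀ co d hd c r₀ hr₀ ν hν0 hνlt
    hνΨ F hF1 hFrec Ma Mb hMa hMb ω hω1 s₁ hωrec C hC hCQ hs₁0 hs₁C hs₁Ψ
end
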